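/- arXiv:0704.2518 — 4 statements merged into one kernel-verified Lean document; each statement's English description precedes it below -/
import Mathlib

section
/- (Reflection principle) Let k ≥ 2 and let C_0 = {x ∈ ℤ^{k-1} : 0 < x_{k-1} < ⋯ < x_1}. Let the hyperoctahedral group B_{k-1} act on ℤ^{k-1} by signed permutations: an element β = (ε, σ) with ε ∈ {+1,-1}^{k-1} and σ a permutation of {1,…,k-1} acts via (β x)_i = ε_i x_{σ^{-1}(i)}, and set (-1)^{ℓ(β)} = sgn(σ)·∏_{i=1}^{k-1} ε_i. For a, b ∈ C_0, let Γ_n(a,b) be the number of walks of length n from a to b with steps 0, ±e_i, and let Γ_n^+(a,b) be the number of such walks all of whose positions lie in C_0. Then Γ_n^+(a,b) = Σ_{β ∈ B_{k-1}} (-1)^{ℓ(β)} Γ_n(β(a), b). -/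
/-- A set of arcs (ordered pairs of vertices) is pairwise vertex-disjoint. -/
def ArcsDisjoint (M : Finset (ℕ × ℕ)) : Prop :=
  ∀ p ∈ M, ∀ q ∈ M, p ≠ q → p.1 ≠ q.1 ∧ p.1 ≠ q.2 ∧ p.2 ≠ q.1 ∧ p.2 ≠ q.2

/-- `M` is a partial matching on `{1,…,n}`: arcs `(i,j)` with `1 ≤ i < j ≤ n`,
every vertex in at most one arc. -/
def IsPartialMatching (n : ℕ) (M : Finset (ℕ × ℕ)) : Prop :=
  (∀ p ∈ M, 1 ≤ p.1 ∧ p.1 < p.2 ∧ p.2 ≤ n) ∧ ArcsDisjoint M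

/-- `M` contains `k` mutually crossing arcs
`(i₁,j₁),…,(i_k,j_k)` with `i₁ < ⋯ < i_k < j₁ < ⋯ < j_k`. -/
def HasKCrossing (k : ℕ) (M : Finset (ℕ × ℕ)) : Prop :=
  ∃ f : Fin k → ℕ × ℕ, (∀ r, f r ∈ M) ∧
    (StrictMono fun r => (f r).1) ∧ (StrictMono fun r => (f r).2) ∧
    ∀ r s : Fin k, (f r).1 < (f s).2

/-- `M` is `k`-noncrossing. -/
def KNoncrossing (k : ℕ) (M : Finset (ℕ × ℕ)) : Prop := ¬ HasKCrossing k M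

/-- The number of isolated vertices of `M` in `{1,…,n}`. -/
def isolatedCount (n : ℕ) (M : Finset (ℕ × ℕ)) : ℕ :=
  ((Finset.Icc 1 n).filter fun v => ∀ p ∈ M, p.1 ≠ v ∧ p.2 ≠ v).card

/-- `fMatch k n ℓ`: the number of `k`-noncrossing partial matchings on `{1,…,n}`
with exactly `ℓ` isolated vertices. -/
noncomputable def fMatch (k n ℓ : ℕ) : ℕ :=
  Nat.card {M : Finset (ℕ × ℕ) //
    IsPartialMatching n M ∧ KNoncrossing k M ∧ isolatedCount n M = ℓ}

/-- A legal step in `ℤ^m`: `0` or `± eᵢ`. -/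
def IsStep {m : ℕ} (s : Fin m → ℤ) : Prop :=
  s = 0 ∨ ∃ i : Fin m, s = Pi.single i 1 ∨ s = Pi.single i (-1)

/-- Position of the walk with steps `s` starting at `a` after `r` steps. -/
def walkPos {m n : ℕ} (a : Fin m → ℤ) (s : Fin n → Fin m → ℤ) (r : ℕ) :
    Fin m → ℤ :=
  a + ∑ h ∈ Finset.univ.filter (fun h : Fin n => (h : ℕ) < r), s h

/-- Interior of the Weyl chamber `C₀`: `0 < x_{k-1} < ⋯ < x₁`
(coordinate `i` of the vector is `x_{i+1}`). -/
def InChamber {m : ℕ} (x : Fin m → ℤ) : Prop :=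
  (∀ i j : Fin m, i < j → x j < x i) ∧ ∀ i : Fin m, 0 < x i

/-- The point `a = (m, m-1, …, 1)` (i.e. `(k-1,…,1)` when `m = k-1`). -/
def startPt (m : ℕ) : Fin m → ℤ := fun i => (m : ℤ) - (i : ℕ)

/-- The signed-permutation action of `β = (ε, σ) ∈ B_m` on `ℤ^m`:
`(β x) i = ε i * x (σ⁻¹ i)`, where `ε i = 1` if `ε i = true` and `-1` else. -/
def signedPermAct {m : ℕ} (ε : Fin m → Bool) (σ : Equiv.Perm (Fin m))
    (x : Fin m → ℤ) : Fin m → ℤ :=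
  fun i => (if ε i then (1 : ℤ) else -1) * x (σ⁻¹ i)

/-- `Γ_n(a,b)`: the number of walks of length `n` from `a` to `b` with steps
`0, ±eᵢ`. -/
noncomputable def walkCount (m n : ℕ) (a b : Fin m → ℤ) : ℕ :=
  Nat.card {s : Fin n → Fin m → ℤ //
    (∀ h, IsStep (s h)) ∧ walkPos a s n = b}

/-- `Γ_n⁺(a,b)`: the number of such walks all of whose positions lie in the
interior of the Weyl chamber. -/
noncomputable def walkCountPos (m n : ℕ) (a b : Fin m → ℤ) : ℕ :=
  Nat.card {s : Fin n → Fin m → ℤ //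
    (∀ h, IsStep (s h)) ∧ walkPos a s n = b ∧
    ∀ r ≤ n, InChamber (walkPos a s r)}


/-!
The Gessel–Zeilberger reflection argument. The right-hand side is a signed count of pairs
`(β, w)` with `w` a walk from `β a` to `b`. If `w` meets a wall `x i = 0` or `x i = ± x j` of
`B_m`, reflect the part of `w` before its first wall point by a reflection fixing that point:
this is a sign-reversing involution, so these pairs cancel. A walk avoiding the walls cannot
change chamber, since a step moves one coordinate by one; so a surviving walk ending at `b`
stays in `C₀`, and its start `β a ∈ C₀` forces `β = 1`.
-/

open Finset

def boolSign (b : Bool) : ℤ := if b then 1 else -1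

@[simp] lemma boolSign_true : boolSign true = 1 := rfl
@[simp] lemma boolSign_false : boolSign false = -1 := rfl

lemma boolSign_beq (a b : Bool) : boolSign (a == b) = boolSign a * boolSign b := by
  cases a <;> cases b <;> rfl

-- The reflecting hyperplanes of `B_m` are `x i = 0` and `x i = ± x j`.
def OffWalls {m : ℕ} (x : Fin m → ℤ) : Prop :=
  (∀ i, x i ≠ 0) ∧ Function.Injective fun i => |x i|

-- `(σ, ε)` acts by `signedPermAct ε σ`; the order of the pair is that of the double sum
-- in the theorem.
abbrev SignedPerm (m : ℕ) := Equiv.Perm (Fin m) × (Fin m → Bool)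

namespace SignedPerm

variable {m : ℕ}

def one : SignedPerm m := (1, fun _ => true)

def mul (p q : SignedPerm m) : SignedPerm m := (p.1 * q.1, fun i => p.2 i == q.2 (p.1⁻¹ i))

def sign (p : SignedPerm m) : ℤ := Equiv.Perm.sign p.1 * ∏ i, boolSign (p.2 i)

def act (p : SignedPerm m) : (Fin m → ℤ) →+ (Fin m → ℤ) where
  toFun := signedPermAct p.2 p.1
  map_zero' := by ext; simp [signedPermAct]
  map_add' x y := by ext; simp [signedPermAct, mul_add]

lemma act_apply (p : SignedPerm m) (x : Fin m → ℤ) (i : Fin m) :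
    p.act x i = boolSign (p.2 i) * x (p.1⁻¹ i) := rfl

lemma one_mul (p : SignedPerm m) : one.mul p = p := by
  ext <;> simp [one, mul]

lemma mul_assoc (p q r : SignedPerm m) : (p.mul q).mul r = p.mul (q.mul r) := by
  refine Prod.ext (_root_.mul_assoc _ _ _) (funext fun i => ?_)
  simp only [mul, _root_.mul_inv_rev, Equiv.Perm.coe_mul, Function.comp_apply]
  cases p.2 i <;> cases q.2 (p.1⁻¹ i) <;> cases r.2 (q.1⁻¹ (p.1⁻¹ i)) <;> rfl

lemma act_one (x : Fin m → ℤ) : one.act x = x := by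
  ext i; simp [act_apply, one]

lemma act_mul (p q : SignedPerm m) (x : Fin m → ℤ) : (p.mul q).act x = p.act (q.act x) := by
  ext i
  simp only [act_apply, mul, boolSign_beq, _root_.mul_inv_rev, Equiv.Perm.coe_mul,
    Function.comp_apply]
  ring

lemma sign_one : (one : SignedPerm m).sign = 1 := by simp [sign, one]

lemma sign_mul (p q : SignedPerm m) : (p.mul q).sign = p.sign * q.sign := by
  have hprod : ∏ i, boolSign (q.2 (p.1⁻¹ i)) = ∏ i, boolSign (q.2 i) :=
    Equiv.prod_comp p.1⁻¹ fun i => boolSign (q.2 i)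
  simp only [sign, mul, map_mul, Units.val_mul, boolSign_beq, prod_mul_distrib, hprod]
  ring

lemma act_single (p : SignedPerm m) (i : Fin m) (c : ℤ) :
    p.act (Pi.single i c) = Pi.single (p.1 i) (boolSign (p.2 (p.1 i)) * c) := by
  ext j
  rcases eq_or_ne j (p.1 i) with rfl | hj
  · simp [act_apply]
  · rw [act_apply, Pi.single_eq_of_ne hj, Pi.single_eq_of_ne, mul_zero]
    exact fun h => hj (by simp [← h])

lemma isStep_act (p : SignedPerm m) {s : Fin m → ℤ} (hs : IsStep s) : IsStep (p.act s) := by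
  rcases hs with rfl | ⟨i, rfl | rfl⟩
  · exact Or.inl (map_zero _)
  all_goals
    refine Or.inr ⟨p.1 i, ?_⟩
    cases h : p.2 (p.1 i) <;> simp [act_single, h]

lemma abs_act_apply (p : SignedPerm m) (x : Fin m → ℤ) (i : Fin m) :
    |p.act x i| = |x (p.1⁻¹ i)| := by
  cases h : p.2 i <;> simp [act_apply, h]

lemma offWalls_act (p : SignedPerm m) {x : Fin m → ℤ} (hx : OffWalls x) : OffWalls (p.act x) := by
  refine ⟨fun i => ?_, fun i j hij => ?_⟩
  · rw [← abs_ne_zero, abs_act_apply, abs_ne_zero]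
    exact hx.1 _
  · simpa only [abs_act_apply, hx.2.eq_iff, EmbeddingLike.apply_eq_iff_eq] using hij

def IsWallReflection (p : SignedPerm m) (x : Fin m → ℤ) : Prop :=
  p.mul p = one ∧ p.act x = x ∧ p.sign = -1

lemma exists_isWallReflection {x : Fin m → ℤ} (hx : ¬ OffWalls x) :
    ∃ p : SignedPerm m, p.IsWallReflection x := by
  simp only [OffWalls, not_and_or, not_forall, not_not, Function.not_injective_iff] at hx
  rcases hx with ⟨i, hi⟩ | ⟨i, j, hij, hne⟩
  · refine ⟨(1, fun l => decide (l ≠ i)), ?_, ?_, ?_⟩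
    · ext l <;> simp [mul, one]
    · ext l; rcases eq_or_ne l i with rfl | h <;> simp [act_apply, *]
    · simp [sign, boolSign, Finset.prod_ite_eq']
  rcases abs_eq_abs.mp hij with h | h
  · refine ⟨(Equiv.swap i j, fun _ => true), ?_, ?_, ?_⟩
    · ext l <;> simp [mul, one]
    · ext l
      rcases eq_or_ne l i with rfl | hli
      · simp [act_apply, h]
      rcases eq_or_ne l j with rfl | hlj
      · simp [act_apply, h]
      · simp [act_apply, Equiv.swap_apply_of_ne_of_ne hli hlj]
    · simp [sign, Equiv.Perm.sign_swap hne]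
  · refine ⟨(Equiv.swap i j, fun l => decide (l ≠ i ∧ l ≠ j)), ?_, ?_, ?_⟩
    · ext l
      · simp [mul, one]
      · rcases eq_or_ne l i with rfl | hli
        · simp [mul, one]
        rcases eq_or_ne l j with rfl | hlj
        · simp [mul, one]
        · simp [mul, one, Equiv.swap_apply_of_ne_of_ne hli hlj, hli, hlj]
    · ext l
      rcases eq_or_ne l i with rfl | hli
      · simp [act_apply, h, hne]
      rcases eq_or_ne l j with rfl | hlj
      · simp [act_apply, h, hne.symm]
      · simp [act_apply, Equiv.swap_apply_of_ne_of_ne hli hlj, hli, hlj]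
    · have hsplit : ∀ l, boolSign (decide (l ≠ i ∧ l ≠ j)) =
          (if l = i then -1 else 1) * (if l = j then -1 else 1) := by
        intro l
        rcases eq_or_ne l i with rfl | hli
        · simp [hne]
        · rcases eq_or_ne l j with rfl | hlj <;> simp [*]
      simp only [sign, Equiv.Perm.sign_swap hne, hsplit, prod_mul_distrib]
      simp

noncomputable def wallReflection (x : Fin m → ℤ) : SignedPerm m :=
  Classical.epsilon (IsWallReflection · x)

lemma isWallReflection_wallReflection {x : Fin m → ℤ} (hx : ¬ OffWalls x) :
    (wallReflection x).IsWallReflection x :=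
  Classical.epsilon_spec (exists_isWallReflection hx)

lemma eq_one_of_inChamber_act {a : Fin m → ℤ} (ha : InChamber a) {p : SignedPerm m}
    (hp : InChamber (p.act a)) : p = one := by
  have hsigns : ∀ i, p.2 i = true := by
    intro i
    by_contra hi
    have := hp.2 i
    simp only [act_apply, Bool.not_eq_true _ ▸ hi, boolSign_false] at this
    linarith [ha.2 (p.1⁻¹ i)]
  have hanti : StrictAnti a := fun i j hij => ha.1 i j hij
  have hmono : StrictMono fun i => p.1⁻¹ i := by
    intro i j hij
    have := hp.1 i j hij
    simp only [act_apply, hsigns, boolSign_true, _root_.one_mul] at this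
    exact hanti.lt_iff_gt.mp this
  have hσ : p.1⁻¹ = 1 := Equiv.ext (congrFun hmono.eq_id)
  exact Prod.ext (inv_eq_one.mp hσ) (funext hsigns)

end SignedPerm

lemma InChamber.offWalls {m : ℕ} {x : Fin m → ℤ} (hx : InChamber x) : OffWalls x := by
  refine ⟨fun i => (hx.2 i).ne', fun i j hij => ?_⟩
  simp only [abs_of_pos (hx.2 i), abs_of_pos (hx.2 j)] at hij
  by_contra hne
  rcases lt_or_gt_of_ne hne with h | h
  · exact (hx.1 i j h).ne' hij
  · exact (hx.1 j i h).ne hij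

lemma IsStep.abs_apply_le_one {m : ℕ} {s : Fin m → ℤ} (hs : IsStep s) (i : Fin m) :
    |s i| ≤ 1 := by
  rcases hs with rfl | ⟨l, rfl | rfl⟩
  · simp
  all_goals
    rw [Pi.single_apply]
    split_ifs <;> simp

lemma IsStep.abs_sub_apply_le_one {m : ℕ} {s : Fin m → ℤ} (hs : IsStep s) (i j : Fin m) :
    |s i - s j| ≤ 1 := by
  rcases hs with rfl | ⟨l, rfl | rfl⟩
  · simp
  all_goals
    simp only [Pi.single_apply]
    split_ifs <;> simp

-- A step changes one coordinate by one, so it cannot jump over a wall of the chamber.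
lemma InChamber.of_add_step {m : ℕ} {x s : Fin m → ℤ} (hx : OffWalls x) (hs : IsStep s)
    (h : InChamber (x + s)) : InChamber x := by
  refine ⟨fun i j hij => ?_, fun i => ?_⟩
  · have hlt : x j + s j < x i + s i := h.1 i j hij
    have hne : x j ≠ x i := fun he => hij.ne' (hx.2 (congrArg abs he))
    have := abs_le.mp (hs.abs_sub_apply_le_one j i)
    omega
  · have hpos : 0 < x i + s i := h.2 i
    have := abs_le.mp (hs.abs_apply_le_one i)
    have := hx.1 i
    omega

section Walks

variable {m n : ℕ}

lemma walkPos_zero (x : Fin m → ℤ) (w : Fin n → Fin m → ℤ) : walkPos x w 0 = x := by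
  simp [walkPos]

lemma walkPos_eq_add_sum (x : Fin m → ℤ) (w : Fin n → Fin m → ℤ) {r j : ℕ} (hrj : r ≤ j) :
    walkPos x w j =
      walkPos x w r + ∑ h ∈ univ.filter (fun h : Fin n => r ≤ (h : ℕ) ∧ (h : ℕ) < j), w h := by
  have hunion : univ.filter (fun h : Fin n => (h : ℕ) < j) =
      univ.filter (fun h : Fin n => (h : ℕ) < r) ∪
        univ.filter (fun h : Fin n => r ≤ (h : ℕ) ∧ (h : ℕ) < j) := by
    ext h; simp only [mem_filter, mem_union, mem_univ, true_and]; omega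
  have hdisj : Disjoint (univ.filter (fun h : Fin n => (h : ℕ) < r))
      (univ.filter (fun h : Fin n => r ≤ (h : ℕ) ∧ (h : ℕ) < j)) := by
    rw [disjoint_filter]; omega
  rw [walkPos, walkPos, hunion, sum_union hdisj, add_assoc]

lemma walkPos_succ (x : Fin m → ℤ) (w : Fin n → Fin m → ℤ) {r : ℕ} (hr : r < n) :
    walkPos x w (r + 1) = walkPos x w r + w ⟨r, hr⟩ := by
  have hsingle : univ.filter (fun h : Fin n => r ≤ (h : ℕ) ∧ (h : ℕ) < r + 1) = {⟨r, hr⟩} := by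
    ext h; simp only [mem_filter, mem_univ, true_and, mem_singleton, Fin.ext_iff]; omega
  rw [walkPos_eq_add_sum x w r.le_succ, hsingle, sum_singleton]

lemma walkPos_congr (x : Fin m → ℤ) {w w' : Fin n → Fin m → ℤ} {r : ℕ}
    (h : ∀ i : Fin n, (i : ℕ) < r → w i = w' i) : walkPos x w r = walkPos x w' r := by
  unfold walkPos
  congr 1
  exact sum_congr rfl fun i hi => h i (mem_filter.mp hi).2

lemma walkPos_map (f : (Fin m → ℤ) →+ (Fin m → ℤ)) (x : Fin m → ℤ) (w : Fin n → Fin m → ℤ)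
    (r : ℕ) : walkPos (f x) (fun h => f (w h)) r = f (walkPos x w r) := by
  simp only [walkPos, map_add, map_sum]

def mapPrefix (f : (Fin m → ℤ) →+ (Fin m → ℤ)) (r : ℕ) (w : Fin n → Fin m → ℤ) :
    Fin n → Fin m → ℤ :=
  fun h => if (h : ℕ) < r then f (w h) else w h

lemma walkPos_mapPrefix_of_le (f : (Fin m → ℤ) →+ (Fin m → ℤ)) (x : Fin m → ℤ)
    (w : Fin n → Fin m → ℤ) {r j : ℕ} (hj : j ≤ r) :
    walkPos (f x) (mapPrefix f r w) j = f (walkPos x w j) := by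
  rw [← walkPos_map]
  exact walkPos_congr _ fun i hi => if_pos (hi.trans_le hj)

lemma walkPos_mapPrefix_of_ge (f : (Fin m → ℤ) →+ (Fin m → ℤ)) (x : Fin m → ℤ)
    (w : Fin n → Fin m → ℤ) {r j : ℕ} (hfix : f (walkPos x w r) = walkPos x w r) (hj : r ≤ j) :
    walkPos (f x) (mapPrefix f r w) j = walkPos x w j := by
  rw [walkPos_eq_add_sum _ _ hj, walkPos_eq_add_sum x w hj, walkPos_mapPrefix_of_le f x w le_rfl,
    hfix]
  congr 1
  exact sum_congr rfl fun i hi => if_neg (mem_filter.mp hi).2.1.not_gt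

lemma mapPrefix_mapPrefix {f : (Fin m → ℤ) →+ (Fin m → ℤ)} (hf : ∀ v, f (f v) = v) (r : ℕ)
    (w : Fin n → Fin m → ℤ) : mapPrefix f r (mapPrefix f r w) = w := by
  funext h
  by_cases hr : (h : ℕ) < r <;> simp [mapPrefix, hr, hf]

lemma inChamber_walkPos_of_offWalls {x : Fin m → ℤ} {w : Fin n → Fin m → ℤ}
    (hw : ∀ h, IsStep (w h)) (hoff : ∀ r ≤ n, OffWalls (walkPos x w r))
    (hend : InChamber (walkPos x w n)) {r : ℕ} (hr : r ≤ n) : InChamber (walkPos x w r) := by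
  induction hr using Nat.decreasingInduction with
  | self => exact hend
  | of_succ k hk ih =>
    rw [walkPos_succ x w hk] at ih
    exact ih.of_add_step (hoff k hk.le) (hw _)

end Walks

abbrev SignedWalk (m n : ℕ) := SignedPerm m × (Fin n → Fin m → ℤ)

namespace SignedWalk

open SignedPerm

variable {m n : ℕ}

def pos (a : Fin m → ℤ) (t : SignedWalk m n) (r : ℕ) : Fin m → ℤ := walkPos (t.1.act a) t.2 r

def wallTimes (a : Fin m → ℤ) (t : SignedWalk m n) : Set ℕ :=
  {r | r ≤ n ∧ ¬ OffWalls (t.pos a r)}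

def HitsWall (a : Fin m → ℤ) (t : SignedWalk m n) : Prop := (t.wallTimes a).Nonempty

noncomputable def firstHit (a : Fin m → ℤ) (t : SignedWalk m n) : ℕ := sInf (t.wallTimes a)

-- The reflection depends only on the first wall point, which `reflect` leaves in place;
-- this is what makes `reflect` an involution.
noncomputable def reflect (a : Fin m → ℤ) (t : SignedWalk m n) : SignedWalk m n :=
  let p := wallReflection (t.pos a (t.firstHit a))
  (p.mul t.1, mapPrefix p.act (t.firstHit a) t.2)

variable {a : Fin m → ℤ} {t : SignedWalk m n}

lemma firstHit_mem (ht : t.HitsWall a) : t.firstHit a ∈ t.wallTimes a := Nat.sInf_mem ht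

lemma offWalls_of_lt_firstHit {r : ℕ} (hr : r < t.firstHit a) (hrn : r ≤ n) :
    OffWalls (t.pos a r) :=
  not_not.mp fun h => Nat.notMem_of_lt_sInf hr ⟨hrn, h⟩

lemma isWallReflection_firstHit (ht : t.HitsWall a) :
    (wallReflection (t.pos a (t.firstHit a))).IsWallReflection (t.pos a (t.firstHit a)) :=
  isWallReflection_wallReflection (firstHit_mem ht).2

lemma pos_reflect_of_le {j : ℕ} (hj : j ≤ t.firstHit a) :
    (t.reflect a).pos a j = (wallReflection (t.pos a (t.firstHit a))).act (t.pos a j) := by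
  simp only [reflect, pos, act_mul]
  exact walkPos_mapPrefix_of_le _ _ _ hj

lemma pos_reflect_of_ge (ht : t.HitsWall a) {j : ℕ} (hj : t.firstHit a ≤ j) :
    (t.reflect a).pos a j = t.pos a j := by
  simp only [reflect, pos, act_mul]
  exact walkPos_mapPrefix_of_ge _ _ _ (isWallReflection_firstHit ht).2.1 hj

lemma firstHit_mem_wallTimes_reflect (ht : t.HitsWall a) :
    t.firstHit a ∈ (t.reflect a).wallTimes a := by
  refine ⟨(firstHit_mem ht).1, ?_⟩
  rw [pos_reflect_of_ge ht le_rfl]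
  exact (firstHit_mem ht).2

-- Before the first hit the reflected walk is the image of `t` under a signed permutation,
-- so it avoids the walls there as well.
lemma firstHit_reflect (ht : t.HitsWall a) : (t.reflect a).firstHit a = t.firstHit a := by
  have hmem := firstHit_mem_wallTimes_reflect ht
  refine le_antisymm (Nat.sInf_le hmem) (not_lt.mp fun hlt => ?_)
  have hle : (t.reflect a).firstHit a ≤ n := (firstHit_mem ⟨_, hmem⟩).1
  refine (firstHit_mem ⟨_, hmem⟩).2 ?_
  rw [pos_reflect_of_le hlt.le]
  exact offWalls_act _ (offWalls_of_lt_firstHit hlt hle)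

lemma hitsWall_reflect (ht : t.HitsWall a) : (t.reflect a).HitsWall a :=
  ⟨_, firstHit_mem_wallTimes_reflect ht⟩

lemma reflect_reflect (ht : t.HitsWall a) : (t.reflect a).reflect a = t := by
  have hp := isWallReflection_firstHit ht
  have hsame : (t.reflect a).pos a ((t.reflect a).firstHit a) = t.pos a (t.firstHit a) := by
    rw [firstHit_reflect ht, pos_reflect_of_ge ht le_rfl]
  have hinv : ∀ v, (wallReflection (t.pos a (t.firstHit a))).act
      ((wallReflection (t.pos a (t.firstHit a))).act v) = v := fun v => by
    rw [← act_mul, hp.1, act_one]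
  conv_lhs => rw [reflect, hsame, firstHit_reflect ht]
  simp only [reflect]
  rw [← mul_assoc, hp.1, one_mul, mapPrefix_mapPrefix hinv]

lemma sign_reflect (ht : t.HitsWall a) : (t.reflect a).1.sign = -t.1.sign := by
  rw [reflect, sign_mul, (isWallReflection_firstHit ht).2.2, neg_one_mul]

lemma inChamber_pos_of_not_hitsWall (hw : ∀ h, IsStep (t.2 h)) (hend : InChamber (t.pos a n))
    (hnot : ¬ t.HitsWall a) {r : ℕ} (hr : r ≤ n) : InChamber (t.pos a r) :=
  inChamber_walkPos_of_offWalls hw (fun r hr => not_not.mp fun h => hnot ⟨r, hr, h⟩) hend hr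

lemma eq_one_of_not_hitsWall (ha : InChamber a) (hw : ∀ h, IsStep (t.2 h))
    (hend : InChamber (t.pos a n)) (hnot : ¬ t.HitsWall a) : t.1 = one := by
  refine eq_one_of_inChamber_act ha ?_
  simpa only [pos, walkPos_zero] using inChamber_pos_of_not_hitsWall hw hend hnot n.zero_le

end SignedWalk

section Counting

open SignedPerm SignedWalk

variable {m n : ℕ}

def stepSet (m : ℕ) : Finset (Fin m → ℤ) :=
  insert 0 (univ.image fun q : Fin m × Bool => Pi.single q.1 (boolSign q.2))

lemma mem_stepSet {s : Fin m → ℤ} : s ∈ stepSet m ↔ IsStep s := by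
  simp only [stepSet, mem_insert, mem_image, mem_univ, true_and, Prod.exists, IsStep]
  refine or_congr Iff.rfl ⟨?_, ?_⟩
  · rintro ⟨i, c, rfl⟩
    cases c
    exacts [⟨i, Or.inr rfl⟩, ⟨i, Or.inl rfl⟩]
  · rintro ⟨i, rfl | rfl⟩
    exacts [⟨i, true, rfl⟩, ⟨i, false, rfl⟩]

def walks (m n : ℕ) : Finset (Fin n → Fin m → ℤ) := Fintype.piFinset fun _ => stepSet m

lemma mem_walks {w : Fin n → Fin m → ℤ} : w ∈ walks m n ↔ ∀ h, IsStep (w h) := by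
  simp only [walks, Fintype.mem_piFinset, mem_stepSet]

lemma natCard_eq_card_filter_walks (P : (Fin n → Fin m → ℤ) → Prop) [DecidablePred P] :
    Nat.card {w : Fin n → Fin m → ℤ // (∀ h, IsStep (w h)) ∧ P w} = #((walks m n).filter P) := by
  rw [← Nat.card_eq_finsetCard]
  exact Nat.card_congr (Equiv.subtypeEquivRight fun w => by simp only [mem_filter, mem_walks])

lemma mem_walks_reflect {a : Fin m → ℤ} {t : SignedWalk m n} (ht : t.2 ∈ walks m n) :
    (t.reflect a).2 ∈ walks m n := by
  rw [mem_walks] at ht ⊢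
  intro h
  simp only [reflect, mapPrefix]
  split_ifs
  exacts [isStep_act _ (ht h), ht h]

def signedWalks (m n : ℕ) (a b : Fin m → ℤ) : Finset (SignedWalk m n) :=
  (univ ×ˢ walks m n).filter fun t => t.pos a n = b

lemma sum_sign_mul_walkCount (a b : Fin m → ℤ) :
    ∑ σ : Equiv.Perm (Fin m), ∑ ε : Fin m → Bool,
        (Equiv.Perm.sign σ : ℤ) * (∏ i, if ε i then (1 : ℤ) else -1) *
          (walkCount m n (signedPermAct ε σ a) b : ℤ) =
      ∑ t ∈ signedWalks m n a b, t.1.sign := by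
  classical
  rw [signedWalks, sum_filter, sum_product, ← Fintype.sum_prod_type']
  refine sum_congr rfl fun p _ => ?_
  rw [← sum_filter]
  simp only [sum_const, nsmul_eq_mul, walkCount, natCard_eq_card_filter_walks]
  rw [mul_comm]
  rfl

lemma sum_sign_signedWalks_hitsWall (a b : Fin m → ℤ) [DecidablePred (HitsWall (n := n) a)] :
    ∑ t ∈ (signedWalks m n a b).filter (HitsWall a), t.1.sign = 0 := by
  refine sum_involution (fun t _ => t.reflect a) (fun t ht => ?_) (fun t ht hne heq => ?_)
    (fun t ht => ?_) (fun t ht => reflect_reflect (mem_filter.mp ht).2)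
  · rw [sign_reflect (mem_filter.mp ht).2, add_neg_cancel]
  · have hsign := sign_reflect (mem_filter.mp ht).2
    rw [heq] at hsign
    exact hne (by linarith)
  · simp only [signedWalks, mem_filter, mem_product, mem_univ, true_and] at ht ⊢
    obtain ⟨⟨hw, hb⟩, hhit⟩ := ht
    exact ⟨⟨mem_walks_reflect hw, by rw [pos_reflect_of_ge hhit (firstHit_mem hhit).1, hb]⟩,
      hitsWall_reflect hhit⟩

lemma sum_sign_signedWalks_not_hitsWall {a b : Fin m → ℤ} (ha : InChamber a) (hb : InChamber b)
    [DecidablePred (HitsWall (n := n) a)] :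
    ∑ t ∈ (signedWalks m n a b).filter (¬ HitsWall a ·), t.1.sign = walkCountPos m n a b := by
  classical
  have hgood : ∀ t ∈ (signedWalks m n a b).filter (¬ HitsWall a ·),
      t.1 = one ∧ ∀ r ≤ n, InChamber (t.pos a r) := by
    intro t ht
    simp only [signedWalks, mem_filter, mem_product, mem_univ, true_and] at ht
    obtain ⟨⟨hw, hend⟩, hnot⟩ := ht
    rw [← hend] at hb
    exact ⟨eq_one_of_not_hitsWall ha (mem_walks.mp hw) hb hnot,
      fun r => inChamber_pos_of_not_hitsWall (mem_walks.mp hw) hb hnot⟩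
  rw [sum_congr rfl (g := fun _ => 1) fun t ht => by rw [(hgood t ht).1, SignedPerm.sign_one],
    sum_const, nsmul_one, walkCountPos, natCard_eq_card_filter_walks]
  norm_cast
  refine card_nbij' Prod.snd (fun w => (one, w)) (fun t ht => ?_) (fun w hw => ?_)
    (fun t ht => ?_) (fun w _ => rfl)
  · obtain ⟨hone, hch⟩ := hgood t ht
    simp only [mem_coe, signedWalks, mem_filter, mem_product, mem_univ, true_and] at ht ⊢
    simp only [pos, hone, act_one] at ht hch
    exact ⟨ht.1.1, ht.1.2, hch⟩
  · simp only [mem_coe, signedWalks, mem_filter, mem_product, mem_univ, true_and] at hw ⊢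
    have hpos : ∀ r, pos a (one, w) r = walkPos a w r := fun r => by rw [pos, act_one]
    refine ⟨⟨hw.1, by rw [hpos, hw.2.1]⟩, fun ⟨r, hr, hoff⟩ => hoff ?_⟩
    rw [hpos]
    exact (hw.2.2 r hr).offWalls
  · exact Prod.ext (hgood t ht).1.symm rfl

end Counting

theorem reflection_principle_general (k n : ℕ)
    (a b : Fin (k - 1) → ℤ) (ha : InChamber a) (hb : InChamber b) :
    (walkCountPos (k - 1) n a b : ℤ) =
      ∑ σ : Equiv.Perm (Fin (k - 1)), ∑ ε : Fin (k - 1) → Bool,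
        (Equiv.Perm.sign σ : ℤ) * (∏ i, if ε i then (1 : ℤ) else -1) *
          (walkCount (k - 1) n (signedPermAct ε σ a) b : ℤ) := by
  classical
  rw [sum_sign_mul_walkCount, ← sum_filter_not_add_sum_filter _ (SignedWalk.HitsWall a),
    sum_sign_signedWalks_hitsWall, add_zero, sum_sign_signedWalks_not_hitsWall ha hb]

/-- **Reflection principle.** For `a, b` in the interior of the
Weyl chamber `C₀`,
`Γ_n⁺(a,b) = Σ_{β ∈ B_{k-1}} (-1)^{ℓ(β)} Γ_n(β(a), b)`. -/
theorem reflection_principle (k n : ℕ) (hk : 2 ≤ k)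
    (a b : Fin (k - 1) → ℤ) (ha : InChamber a) (hb : InChamber b) :
    (walkCountPos (k - 1) n a b : ℤ) =
      ∑ σ : Equiv.Perm (Fin (k - 1)), ∑ ε : Fin (k - 1) → Bool,
        (Equiv.Perm.sign σ : ℤ) * (∏ i, if ε i then (1 : ℤ) else -1) *
          (walkCount (k - 1) n (signedPermAct ε σ a) b : ℤ) :=
  reflection_principle_general k n a b ha hb
end

section
/- Let k ≥ 2. The number S_k(n,ℓ) of k-noncrossing RNA structures on {1,…,n} with exactly ℓ isolated vertices satisfies S_k(n,ℓ) = Σ_{b=0}^{⌊(n-ℓ)/2⌋} (-1)^b · C(n-b, b) · f_k(n-2b, ℓ), where C(·,·) is the binomial coefficient. -/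
/-- `S_k(n,ℓ)`: the number of `k`-noncrossing RNA structures on `{1,…,n}`
(`k`-noncrossing partial matchings with no 1-arc `(i,i+1)`)
with exactly `ℓ` isolated vertices. -/
noncomputable def SCount (k n ℓ : ℕ) : ℕ :=
  Nat.card {M : Finset (ℕ × ℕ) //
    IsPartialMatching n M ∧ KNoncrossing k M ∧
    (∀ p ∈ M, p.2 ≠ p.1 + 1) ∧ isolatedCount n M = ℓ}

/-!
Inclusion–exclusion over sets of 1-arcs. For a matching `M`, the alternating sum of `(-1)^|L|`
over the subsets `L` of the left endpoints of 1-arcs of `M` is `1` if `M` has no 1-arc and `0`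
otherwise; swapping the sums, `S_k(n,ℓ) = Σ_L (-1)^|L| N(L)`, where `N(L)` counts the
`k`-noncrossing matchings containing all 1-arcs `(i,i+1)`, `i ∈ L`. These 1-arcs are disjoint
iff `L` has no two consecutive elements. Since for `k ≥ 2` a 1-arc never belongs to a
`k`-crossing, removing them is then a bijection onto the `k`-noncrossing matchings with `ℓ`
isolated vertices on the `n - 2|L|` remaining vertices, and relabelling these increasingly by
`1, …, n - 2|L|` gives `N(L) = f_k(n - 2|L|, ℓ)`. Finally, `{1, …, n-1}` has `C(n-b, b)`
subsets of size `b` without consecutive elements.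
-/

open Finset

def IsMatchingOn (A : Finset ℕ) (R : Finset (ℕ × ℕ)) : Prop :=
  (∀ p ∈ R, p.1 ∈ A ∧ p.2 ∈ A ∧ p.1 < p.2) ∧ ArcsDisjoint R

def isolatedOn (A : Finset ℕ) (R : Finset (ℕ × ℕ)) : Finset ℕ :=
  A.filter fun v => ∀ p ∈ R, p.1 ≠ v ∧ p.2 ≠ v

open scoped Classical in
noncomputable def matchingsOn (k : ℕ) (A : Finset ℕ) (ℓ : ℕ) : Finset (Finset (ℕ × ℕ)) :=
  (A ×ˢ A).powerset.filter fun R =>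
    IsMatchingOn A R ∧ KNoncrossing k R ∧ #(isolatedOn A R) = ℓ

section Matchings

variable {k ℓ : ℕ} {A : Finset ℕ} {O R M : Finset (ℕ × ℕ)}

lemma ArcsDisjoint.mono (hM : ArcsDisjoint M) (hRM : R ⊆ M) : ArcsDisjoint R :=
  fun p hp q hq => hM p (hRM hp) q (hRM hq)

lemma IsMatchingOn.mono (hM : IsMatchingOn A M) (hRM : R ⊆ M) : IsMatchingOn A R :=
  ⟨fun p hp => hM.1 p (hRM hp), hM.2.mono hRM⟩

lemma IsMatchingOn.subset_product (hR : IsMatchingOn A R) : R ⊆ A ×ˢ A :=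
  fun p hp => mem_product.2 ⟨(hR.1 p hp).1, (hR.1 p hp).2.1⟩

lemma mem_matchingsOn :
    R ∈ matchingsOn k A ℓ ↔ IsMatchingOn A R ∧ KNoncrossing k R ∧ #(isolatedOn A R) = ℓ := by
  classical
  simp only [matchingsOn, mem_filter, mem_powerset, and_iff_right_iff_imp]
  exact fun h => h.1.subset_product

lemma isPartialMatching_iff_isMatchingOn {n : ℕ} :
    IsPartialMatching n M ↔ IsMatchingOn (Icc 1 n) M := by
  simp only [IsPartialMatching, IsMatchingOn, mem_Icc]
  refine and_congr_left' ⟨fun h p hp => ?_, fun h p hp => ?_⟩ <;>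
    have := h p hp <;> omega

lemma fMatch_eq_card (k n ℓ : ℕ) : fMatch k n ℓ = #(matchingsOn k (Icc 1 n) ℓ) := by
  rw [fMatch, ← Nat.card_eq_finsetCard]
  exact Nat.card_congr <| Equiv.subtypeEquivRight fun M => by
    rw [mem_matchingsOn, isPartialMatching_iff_isMatchingOn]; rfl

lemma SCount_eq_card (k n ℓ : ℕ) :
    SCount k n ℓ = #((matchingsOn k (Icc 1 n) ℓ).filter fun M => ∀ p ∈ M, p.2 ≠ p.1 + 1) := by
  rw [SCount, ← Nat.card_eq_finsetCard]
  exact Nat.card_congr <| Equiv.subtypeEquivRight fun M => by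
    rw [mem_filter, mem_matchingsOn, isPartialMatching_iff_isMatchingOn, isolatedCount]
    tauto

lemma isolatedOn_subset : isolatedOn A R ⊆ A := filter_subset _ _

lemma isolatedOn_union : isolatedOn A (O ∪ R) = isolatedOn (isolatedOn A O) R := by
  simp only [isolatedOn, filter_filter, forall_mem_union]

lemma IsMatchingOn.sdiff (hM : IsMatchingOn A M) (hOM : O ⊆ M) :
    IsMatchingOn (isolatedOn A O) (M \ O) := by
  refine ⟨fun p hp => ?_, hM.2.mono sdiff_subset⟩
  obtain ⟨hpM, hpO⟩ := mem_sdiff.1 hp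
  have hfar : ∀ q ∈ O, p.1 ≠ q.1 ∧ p.1 ≠ q.2 ∧ p.2 ≠ q.1 ∧ p.2 ≠ q.2 := fun q hq =>
    hM.2 p hpM q (hOM hq) (ne_of_mem_of_not_mem hq hpO).symm
  obtain ⟨h1, h2, hlt⟩ := hM.1 p hpM
  refine ⟨mem_filter.2 ⟨h1, fun q hq => ?_⟩, mem_filter.2 ⟨h2, fun q hq => ?_⟩, hlt⟩ <;>
    have := hfar q hq <;> exact ⟨by tauto, by tauto⟩

lemma IsMatchingOn.union (hO : IsMatchingOn A O) (hR : IsMatchingOn (isolatedOn A O) R) :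
    IsMatchingOn A (O ∪ R) := by
  have hRA : ∀ p ∈ R, p.1 ∈ A ∧ p.2 ∈ A ∧ p.1 < p.2 := fun p hp =>
    have h := hR.1 p hp
    ⟨(mem_filter.1 h.1).1, (mem_filter.1 h.2.1).1, h.2.2⟩
  have hfar : ∀ p ∈ O, ∀ q ∈ R, p.1 ≠ q.1 ∧ p.1 ≠ q.2 ∧ p.2 ≠ q.1 ∧ p.2 ≠ q.2 :=
    fun p hp q hq =>
      have h1 := (mem_filter.1 (hR.1 q hq).1).2 p hp
      have h2 := (mem_filter.1 (hR.1 q hq).2.1).2 p hp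
      ⟨h1.1, h2.1, h1.2, h2.2⟩
  refine ⟨fun p hp => (mem_union.1 hp).elim (hO.1 p) (hRA p), fun p hp q hq hpq => ?_⟩
  rcases mem_union.1 hp with hp | hp <;> rcases mem_union.1 hq with hq | hq
  · exact hO.2 p hp q hq hpq
  · exact hfar p hp q hq
  · have := hfar q hq p hp; exact ⟨this.1.symm, this.2.2.1.symm, this.2.1.symm, this.2.2.2.symm⟩
  · exact hR.2 p hp q hq hpq

lemma disjoint_of_isMatchingOn_isolatedOn (hR : IsMatchingOn (isolatedOn A O) R) :
    Disjoint O R :=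
  disjoint_left.2 fun p hpO hpR => ((mem_filter.1 (hR.1 p hpR).1).2 p hpO).1 rfl

lemma card_isolatedOn_add_two_mul_card (hM : IsMatchingOn A M) :
    #(isolatedOn A M) + 2 * #M = #A := by
  induction M using Finset.induction_on generalizing A with
  | empty => simp [isolatedOn]
  | insert p M hpM ih =>
    obtain ⟨h1, h2, hlt⟩ := hM.1 p (mem_insert_self p M)
    have hsplit : insert p M = {p} ∪ M := insert_eq p M
    have hrest : IsMatchingOn (isolatedOn A {p}) M := by
      have h := hM.sdiff (singleton_subset_iff.2 (mem_insert_self p M))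
      rwa [insert_sdiff_of_mem _ (mem_singleton_self p), sdiff_singleton_eq_erase,
        erase_eq_of_notMem hpM] at h
    have hp : isolatedOn A {p} = (A.erase p.1).erase p.2 := by
      ext v; simp only [isolatedOn, mem_filter, mem_singleton, forall_eq, mem_erase]; tauto
    have hcard : #(isolatedOn A {p}) + 2 = #A := by
      rw [hp, ← card_erase_add_one h1, ← card_erase_add_one (mem_erase.2 ⟨hlt.ne', h2⟩)]
    rw [hsplit, isolatedOn_union, card_union_of_disjoint (disjoint_singleton_left.2 hpM),
      card_singleton]
    have := ih hrest
    omega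

end Matchings

section Relabel

variable {k ℓ : ℕ} {φ : ℕ → ℕ} {A : Finset ℕ} {R : Finset (ℕ × ℕ)}

lemma IsMatchingOn.image (hφ : StrictMonoOn φ A) (hR : IsMatchingOn A R) :
    IsMatchingOn (A.image φ) (R.image (Prod.map φ φ)) := by
  refine ⟨?_, ?_⟩
  · simp only [forall_mem_image, Prod.map_fst, Prod.map_snd]
    intro p hp
    obtain ⟨h1, h2, hlt⟩ := hR.1 p hp
    exact ⟨mem_image_of_mem φ h1, mem_image_of_mem φ h2, hφ h1 h2 hlt⟩
  · simp only [ArcsDisjoint, forall_mem_image, Prod.map_fst, Prod.map_snd]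
    intro p hp q hq hpq
    obtain ⟨hp1, hp2, -⟩ := hR.1 p hp
    obtain ⟨hq1, hq2, -⟩ := hR.1 q hq
    obtain ⟨e1, e2, e3, e4⟩ := hR.2 p hp q hq (fun h => hpq (h ▸ rfl))
    exact ⟨hφ.injOn.ne hp1 hq1 e1, hφ.injOn.ne hp1 hq2 e2,
      hφ.injOn.ne hp2 hq1 e3, hφ.injOn.ne hp2 hq2 e4⟩

lemma isolatedOn_image (hφ : Set.InjOn φ A) (hR : IsMatchingOn A R) :
    isolatedOn (A.image φ) (R.image (Prod.map φ φ)) = (isolatedOn A R).image φ := by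
  rw [isolatedOn, isolatedOn, filter_image]
  refine congrArg _ (filter_congr fun v hv => ?_)
  simp only [forall_mem_image, Prod.map_fst, Prod.map_snd]
  refine forall₂_congr fun p hp => ?_
  obtain ⟨h1, h2, -⟩ := hR.1 p hp
  exact and_congr (hφ.ne_iff h1 hv) (hφ.ne_iff h2 hv)

lemma HasKCrossing.of_image (hφ : StrictMonoOn φ A) (hR : IsMatchingOn A R)
    (h : HasKCrossing k (R.image (Prod.map φ φ))) : HasKCrossing k R := by
  obtain ⟨f, hf, hm1, hm2, hcr⟩ := h
  choose g hg hgf using fun r => mem_image.1 (hf r)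
  have hA : ∀ r, (g r).1 ∈ A ∧ (g r).2 ∈ A := fun r => ⟨(hR.1 _ (hg r)).1, (hR.1 _ (hg r)).2.1⟩
  have h1 : ∀ r, φ (g r).1 = (f r).1 := fun r => congrArg Prod.fst (hgf r)
  have h2 : ∀ r, φ (g r).2 = (f r).2 := fun r => congrArg Prod.snd (hgf r)
  refine ⟨g, hg, fun r s hrs => ?_, fun r s hrs => ?_, fun r s => ?_⟩
  · exact (hφ.lt_iff_lt (hA r).1 (hA s).1).1 (by rw [h1, h1]; exact hm1 hrs)
  · exact (hφ.lt_iff_lt (hA r).2 (hA s).2).1 (by rw [h2, h2]; exact hm2 hrs)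
  · exact (hφ.lt_iff_lt (hA r).1 (hA s).2).1 (by rw [h1, h2]; exact hcr r s)

lemma card_matchingsOn_le_image (hφ : StrictMonoOn φ A) :
    #(matchingsOn k A ℓ) ≤ #(matchingsOn k (A.image φ) ℓ) := by
  have hinj : Set.InjOn (Prod.map φ φ) ↑(A ×ˢ A) := by
    rw [coe_product]; exact hφ.injOn.prodMap hφ.injOn
  refine card_le_card_of_injOn (fun R => R.image (Prod.map φ φ)) (fun R hR => ?_) ?_
  · obtain ⟨hRm, hnc, hiso⟩ := mem_matchingsOn.1 hR
    refine mem_matchingsOn.2 ⟨hRm.image hφ, fun h => hnc (h.of_image hφ hRm), ?_⟩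
    rw [isolatedOn_image hφ.injOn hRm,
      card_image_of_injOn (hφ.injOn.mono (coe_subset.2 isolatedOn_subset)), hiso]
  · intro R hR R' hR' hRR'
    exact (image_eq_image_iff_of_injOn hinj (mem_matchingsOn.1 hR).1.subset_product
      (mem_matchingsOn.1 hR').1.subset_product).1 hRR'

lemma exists_strictMonoOn_image_eq {B : Finset ℕ} (h : #A = #B) :
    ∃ φ : ℕ → ℕ, StrictMonoOn φ A ∧ A.image φ = B := by
  classical
  set φ : ℕ → ℕ := fun v =>
    if hv : v ∈ A then B.orderEmbOfFin h.symm ((A.orderIsoOfFin rfl).symm ⟨v, hv⟩) else 0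
  have hφ : StrictMonoOn φ A := fun u hu v hv huv => by
    simp only [φ, dif_pos (mem_coe.1 hu), dif_pos (mem_coe.1 hv)]
    exact (B.orderEmbOfFin h.symm).strictMono ((A.orderIsoOfFin rfl).symm.strictMono huv)
  refine ⟨φ, hφ, eq_of_subset_of_card_le ?_ ?_⟩
  · simp only [subset_iff, forall_mem_image]
    intro v hv
    simp only [φ, dif_pos hv, orderEmbOfFin_mem]
  · rw [card_image_of_injOn hφ.injOn, h]

lemma card_matchingsOn_congr {B : Finset ℕ} (h : #A = #B) :
    #(matchingsOn k A ℓ) = #(matchingsOn k B ℓ) := by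
  obtain ⟨φ, hφ, rfl⟩ := exists_strictMonoOn_image_eq h
  obtain ⟨ψ, hψ, hψA⟩ := exists_strictMonoOn_image_eq h.symm
  have hle : #(matchingsOn k (A.image φ) ℓ) ≤ #(matchingsOn k A ℓ) := by
    simpa only [hψA] using card_matchingsOn_le_image (k := k) (ℓ := ℓ) hψ
  exact (card_matchingsOn_le_image hφ).antisymm hle

end Relabel

section OneArcs

variable {k ℓ n : ℕ} {A : Finset ℕ} {O R M : Finset (ℕ × ℕ)}

lemma HasKCrossing.mono (h : HasKCrossing k R) (hRM : R ⊆ M) : HasKCrossing k M :=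
  let ⟨f, hf, hf'⟩ := h
  ⟨f, fun r => hRM (hf r), hf'⟩

lemma HasKCrossing.of_union_oneArcs (hk : 2 ≤ k) (hO : ∀ p ∈ O, p.2 = p.1 + 1)
    (h : HasKCrossing k (O ∪ R)) : HasKCrossing k R := by
  obtain ⟨f, hf, hm1, hm2, hcr⟩ := h
  -- Some other arc of the crossing has an endpoint strictly inside `f r`.
  have hgap : ∀ r, (f r).1 + 1 < (f r).2 := by
    intro r
    have : Nontrivial (Fin k) := Fin.nontrivial_iff_two_le.2 hk
    obtain ⟨s, hs⟩ := exists_ne r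
    rcases hs.lt_or_gt with hsr | hrs
    · have : (f s).2 < (f r).2 := hm2 hsr
      have := hcr r s; omega
    · have : (f r).1 < (f s).1 := hm1 hrs
      have := hcr s r; omega
  refine ⟨f, fun r => ?_, hm1, hm2, hcr⟩
  rcases mem_union.1 (hf r) with hrO | hrR
  · have := hO _ hrO; have := hgap r; omega
  · exact hrR

lemma card_matchingsOn_filter_superset (hk : 2 ≤ k) (hO : IsMatchingOn A O)
    (hO1 : ∀ p ∈ O, p.2 = p.1 + 1) :
    #((matchingsOn k A ℓ).filter (O ⊆ ·)) = #(matchingsOn k (isolatedOn A O) ℓ) := by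
  refine card_nbij' (· \ O) (O ∪ ·) (fun M hM => ?_) (fun R hR => ?_) (fun M hM => ?_)
    (fun R hR => ?_)
  · obtain ⟨hM, hOM⟩ := mem_filter.1 hM
    obtain ⟨hMm, hnc, hiso⟩ := mem_matchingsOn.1 hM
    refine mem_matchingsOn.2 ⟨hMm.sdiff hOM, fun h => hnc (h.mono sdiff_subset), ?_⟩
    rw [← isolatedOn_union, union_sdiff_of_subset hOM, hiso]
  · obtain ⟨hRm, hnc, hiso⟩ := mem_matchingsOn.1 hR
    refine mem_filter.2 ⟨mem_matchingsOn.2 ⟨hO.union hRm,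
      fun h => hnc (h.of_union_oneArcs hk hO1), ?_⟩, subset_union_left⟩
    rw [isolatedOn_union, hiso]
  · exact union_sdiff_of_subset (mem_filter.1 hM).2
  · exact union_sdiff_cancel_left (disjoint_of_isMatchingOn_isolatedOn (mem_matchingsOn.1 hR).1)

def oneArcs (L : Finset ℕ) : Finset (ℕ × ℕ) := L.image fun i => (i, i + 1)

def NoConsecutive (L : Finset ℕ) : Prop := ∀ i ∈ L, i + 1 ∉ L

instance : DecidablePred NoConsecutive := fun L =>
  inferInstanceAs (Decidable (∀ i ∈ L, i + 1 ∉ L))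

lemma card_oneArcs (L : Finset ℕ) : #(oneArcs L) = #L :=
  card_image_of_injective _ fun _ _ h => congrArg Prod.fst h

lemma isMatchingOn_oneArcs_iff {L : Finset ℕ} (hL : L ⊆ Ico 1 n) :
    IsMatchingOn (Icc 1 n) (oneArcs L) ↔ NoConsecutive L := by
  simp only [IsMatchingOn, ArcsDisjoint, oneArcs, forall_mem_image, NoConsecutive, mem_Icc]
  constructor
  · rintro ⟨-, hdisj⟩ i hi hi'
    exact (hdisj hi hi' (by simp)).2.2.1 rfl
  · intro h
    refine ⟨fun i hi => ?_, fun i hi j hj hij => ?_⟩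
    · have := mem_Ico.1 (hL hi); omega
    · have hne : i ≠ j := fun e => hij (e ▸ rfl)
      refine ⟨hne, ?_, ?_, by omega⟩ <;> rintro rfl
      exacts [h j hj hi, h i hi hj]

lemma card_matchingsOn_filter_oneArcs_subset (hk : 2 ≤ k) {L : Finset ℕ} (hL : L ⊆ Ico 1 n) :
    #((matchingsOn k (Icc 1 n) ℓ).filter (oneArcs L ⊆ ·)) =
      if NoConsecutive L then fMatch k (n - 2 * #L) ℓ else 0 := by
  split_ifs with hNC
  · have hO := (isMatchingOn_oneArcs_iff hL).2 hNC
    have hcard : #(isolatedOn (Icc 1 n) (oneArcs L)) = #(Icc 1 (n - 2 * #L)) := by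
      have := card_isolatedOn_add_two_mul_card hO
      rw [card_oneArcs, Nat.card_Icc] at this
      rw [Nat.card_Icc]
      omega
    rw [card_matchingsOn_filter_superset hk hO (by simp [oneArcs]), fMatch_eq_card,
      card_matchingsOn_congr hcard]
  · rw [card_eq_zero, filter_eq_empty_iff]
    exact fun M hM hOM => hNC ((isMatchingOn_oneArcs_iff hL).1 ((mem_matchingsOn.1 hM).1.mono hOM))

end OneArcs

lemma NoConsecutive.mono {L L' : Finset ℕ} (h : NoConsecutive L) (hL' : L' ⊆ L) :
    NoConsecutive L' :=
  fun i hi hi' => h i (hL' hi) (hL' hi')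

lemma filter_noConsecutive_filter_notMem (n b : ℕ) :
    ((powersetCard b (Ico 1 (n + 2))).filter NoConsecutive).filter (n + 1 ∉ ·) =
      (powersetCard b (Ico 1 (n + 1))).filter NoConsecutive := by
  have hIco : Ico 1 (n + 2) = insert (n + 1) (Ico 1 (n + 1)) :=
    Nat.Ico_succ_right_eq_insert_Ico (by omega)
  ext L
  simp only [mem_filter, mem_powersetCard]
  constructor
  · rintro ⟨⟨⟨hL, hcard⟩, hNC⟩, hn⟩
    exact ⟨⟨(subset_insert_iff_of_notMem hn).1 (hIco ▸ hL), hcard⟩, hNC⟩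
  · rintro ⟨⟨hL, hcard⟩, hNC⟩
    exact ⟨⟨⟨hL.trans (Ico_subset_Ico_right (by omega)), hcard⟩, hNC⟩,
      fun hn => by simpa using hL hn⟩

lemma card_filter_noConsecutive_filter_mem (n b : ℕ) :
    #(((powersetCard (b + 1) (Ico 1 (n + 2))).filter NoConsecutive).filter (n + 1 ∈ ·)) =
      #((powersetCard b (Ico 1 n)).filter NoConsecutive) := by
  refine card_nbij' (·.erase (n + 1)) (insert (n + 1)) (fun L hL => ?_) (fun L hL => ?_)
    (fun L hL => insert_erase (mem_filter.1 hL).2) (fun L hL => ?_)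
  · rw [mem_coe, mem_filter, mem_filter, mem_powersetCard] at hL
    obtain ⟨⟨⟨hL, hcard⟩, hNC⟩, hn⟩ := hL
    refine mem_filter.2 ⟨mem_powersetCard.2 ⟨fun i hi => ?_, ?_⟩, hNC.mono (erase_subset _ _)⟩
    · obtain ⟨hin, hi⟩ := mem_erase.1 hi
      have := mem_Ico.1 (hL hi)
      have : i ≠ n := fun e => hNC i hi (e ▸ hn)
      exact mem_Ico.2 (by omega)
    · rw [card_erase_of_mem hn, hcard]; rfl
  · obtain ⟨hL, hNC⟩ := mem_filter.1 hL
    obtain ⟨hL, hcard⟩ := mem_powersetCard.1 hL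
    have hn : n + 1 ∉ L := fun h => by have := mem_Ico.1 (hL h); omega
    refine mem_filter.2 ⟨mem_filter.2 ⟨mem_powersetCard.2 ⟨fun i hi => ?_, ?_⟩, ?_⟩,
      mem_insert_self _ _⟩
    · rcases mem_insert.1 hi with rfl | hi
      · exact mem_Ico.2 (by omega)
      · have := mem_Ico.1 (hL hi); exact mem_Ico.2 (by omega)
    · rw [card_insert_of_notMem hn, hcard]
    · intro i hi hi'
      rcases mem_insert.1 hi with rfl | hi <;> rcases mem_insert.1 hi' with hi' | hi'
      · omega
      · have := mem_Ico.1 (hL hi'); omega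
      · have := mem_Ico.1 (hL hi); omega
      · exact hNC i hi hi'
  · have hn : n + 1 ∉ L := fun h => by
      have := mem_Ico.1 ((mem_powersetCard.1 (mem_filter.1 hL).1).1 h); omega
    exact erase_insert hn

lemma card_noConsecutive_succ_succ (n b : ℕ) :
    #((powersetCard (b + 1) (Ico 1 (n + 2))).filter NoConsecutive) =
      #((powersetCard (b + 1) (Ico 1 (n + 1))).filter NoConsecutive) +
        #((powersetCard b (Ico 1 n)).filter NoConsecutive) := by
  rw [← card_filter_add_card_filter_not (p := (n + 1 ∈ ·)), add_comm,
    filter_noConsecutive_filter_notMem, card_filter_noConsecutive_filter_mem]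

lemma card_noConsecutive : ∀ n b : ℕ,
    #((powersetCard b (Ico 1 n)).filter NoConsecutive) = (n - b).choose b
  | n, 0 => by
    rw [powersetCard_zero, filter_singleton, if_pos (by simp [NoConsecutive]), card_singleton,
      Nat.choose_zero_right]
  | 0, b + 1 | 1, b + 1 => by simp
  | n + 2, b + 1 => by
    rw [card_noConsecutive_succ_succ, card_noConsecutive (n + 1) (b + 1), card_noConsecutive n b]
    rcases Nat.lt_or_ge n b with hnb | hbn
    · rw [Nat.sub_eq_zero_of_le (by omega : n + 1 ≤ b + 1),
        Nat.sub_eq_zero_of_le (by omega : n + 2 ≤ b + 1), Nat.sub_eq_zero_of_le hnb.le,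
        Nat.choose_zero_succ, Nat.choose_eq_zero_of_lt (by omega : 0 < b)]
    · rw [show n + 2 - (b + 1) = n - b + 1 by omega, show n + 1 - (b + 1) = n - b by omega,
        Nat.choose_succ_succ', add_comm]

def oneArcStarts (M : Finset (ℕ × ℕ)) : Finset ℕ :=
  (M.filter fun p => p.2 = p.1 + 1).image Prod.fst

section InclusionExclusion

variable {n : ℕ} {L : Finset ℕ} {M : Finset (ℕ × ℕ)}

lemma subset_oneArcStarts_iff : L ⊆ oneArcStarts M ↔ oneArcs L ⊆ M := by
  rw [oneArcs, image_subset_iff]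
  simp only [subset_iff, oneArcStarts, mem_image, mem_filter]
  refine ⟨fun h i hi => ?_, fun h i hi => ⟨_, ⟨h i hi, rfl⟩, rfl⟩⟩
  obtain ⟨p, ⟨hp, hp1⟩, rfl⟩ := h hi
  rwa [← hp1]

lemma oneArcStarts_eq_empty_iff : oneArcStarts M = ∅ ↔ ∀ p ∈ M, p.2 ≠ p.1 + 1 := by
  simp [oneArcStarts, filter_eq_empty_iff]

lemma IsMatchingOn.oneArcStarts_subset (hM : IsMatchingOn (Icc 1 n) M) :
    oneArcStarts M ⊆ Ico 1 n := by
  simp only [subset_iff, oneArcStarts, mem_image, mem_filter]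
  rintro _ ⟨p, ⟨hp, hp1⟩, rfl⟩
  have := hM.1 p hp
  simp only [mem_Icc] at this
  exact mem_Ico.2 (by omega)

lemma card_filter_no_oneArc (T : Finset (Finset (ℕ × ℕ)))
    (hT : ∀ M ∈ T, IsMatchingOn (Icc 1 n) M) :
    (#(T.filter fun M => ∀ p ∈ M, p.2 ≠ p.1 + 1) : ℤ) =
      ∑ L ∈ (Ico 1 n).powerset, (-1) ^ #L * (#(T.filter (oneArcs L ⊆ ·)) : ℤ) := by
  calc (#(T.filter fun M => ∀ p ∈ M, p.2 ≠ p.1 + 1) : ℤ)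
      = ∑ M ∈ T, ∑ L ∈ (oneArcStarts M).powerset, (-1 : ℤ) ^ #L := by
        rw [card_filter, Nat.cast_sum]
        refine sum_congr rfl fun M _ => ?_
        simp only [sum_powerset_neg_one_pow_card, oneArcStarts_eq_empty_iff, Nat.cast_ite,
          Nat.cast_one, Nat.cast_zero]
    _ = ∑ L ∈ (Ico 1 n).powerset, ∑ M ∈ T.filter (oneArcs L ⊆ ·), (-1 : ℤ) ^ #L := by
        refine sum_comm' fun M L => ?_
        simp only [mem_powerset, mem_filter, ← subset_oneArcStarts_iff]
        exact ⟨fun h => ⟨h, h.2.trans (hT M h.1).oneArcStarts_subset⟩, And.left⟩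
    _ = _ := by simp only [sum_const, nsmul_eq_mul, mul_comm]

end InclusionExclusion

lemma sum_powerset_Ico_noConsecutive (n : ℕ) (h : ℕ → ℤ) :
    ∑ L ∈ (Ico 1 n).powerset, (if NoConsecutive L then h #L else 0) =
      ∑ b ∈ range (n + 1), ((n - b).choose b : ℤ) * h b := by
  have hcard : ∀ L ∈ (Ico 1 n).powerset, #L ∈ range (n + 1) := fun L hL => by
    have := card_le_card (mem_powerset.1 hL)
    rw [Nat.card_Ico] at this
    exact mem_range.2 (by omega)
  rw [← sum_fiberwise_of_maps_to hcard]
  refine sum_congr rfl fun b _ => ?_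
  rw [← powersetCard_eq_filter, ← sum_filter,
    sum_congr rfl fun L hL => by rw [(mem_powersetCard.1 (mem_filter.1 hL).1).2],
    sum_const, card_noConsecutive, nsmul_eq_mul]

lemma fMatch_eq_zero_of_lt {k n ℓ : ℕ} (h : n < ℓ) : fMatch k n ℓ = 0 := by
  rw [fMatch_eq_card, card_eq_zero, eq_empty_iff_forall_notMem]
  intro M hM
  have := card_le_card (isolatedOn_subset (A := Icc 1 n) (R := M))
  rw [(mem_matchingsOn.1 hM).2.2, Nat.card_Icc] at this
  omega

theorem SCount_eq_alternating_sum_general (k n ℓ : ℕ) (hk : 2 ≤ k) :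
    (SCount k n ℓ : ℤ) =
      ∑ b ∈ Finset.range ((n - ℓ) / 2 + 1),
        (-1) ^ b * ((n - b).choose b : ℤ) * (fMatch k (n - 2 * b) ℓ : ℤ) := by
  have hvanish : ∀ b ∈ range (n + 1), b ∉ range ((n - ℓ) / 2 + 1) →
      (-1) ^ b * ((n - b).choose b : ℤ) * (fMatch k (n - 2 * b) ℓ : ℤ) = 0 := by
    intro b _ hb
    rw [mem_range, not_lt] at hb
    rcases le_or_gt (2 * b) n with h2b | h2b
    · rw [fMatch_eq_zero_of_lt (by omega), Nat.cast_zero, mul_zero]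
    · rw [Nat.choose_eq_zero_of_lt (by omega), Nat.cast_zero, mul_zero, zero_mul]
  calc (SCount k n ℓ : ℤ)
      = ∑ L ∈ (Ico 1 n).powerset,
          (-1) ^ #L * (#((matchingsOn k (Icc 1 n) ℓ).filter (oneArcs L ⊆ ·)) : ℤ) := by
        rw [SCount_eq_card]
        exact card_filter_no_oneArc _ fun M hM => (mem_matchingsOn.1 hM).1
    _ = ∑ L ∈ (Ico 1 n).powerset,
          if NoConsecutive L then (-1) ^ #L * (fMatch k (n - 2 * #L) ℓ : ℤ) else 0 :=
        sum_congr rfl fun L hL => by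
          rw [card_matchingsOn_filter_oneArcs_subset hk (mem_powerset.1 hL)]
          split_ifs <;> simp
    _ = ∑ b ∈ range (n + 1), ((n - b).choose b : ℤ) * ((-1) ^ b * fMatch k (n - 2 * b) ℓ) :=
        sum_powerset_Ico_noConsecutive n fun b => (-1) ^ b * (fMatch k (n - 2 * b) ℓ : ℤ)
    _ = _ := by
        rw [sum_subset (range_subset_range.2 (by omega)) hvanish]
        exact sum_congr rfl fun b _ => by ring

/-- For `k ≥ 2`, `ℓ ≤ n`:
`S_k(n,ℓ) = Σ_{b=0}^{⌊(n-ℓ)/2⌋} (-1)^b C(n-b,b) f_k(n-2b, ℓ)`. -/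
theorem SCount_eq_alternating_sum (k n ℓ : ℕ) (hk : 2 ≤ k) (hl : ℓ ≤ n) :
    (SCount k n ℓ : ℤ) =
      ∑ b ∈ Finset.range ((n - ℓ) / 2 + 1),
        (-1) ^ b * ((n - b).choose b : ℤ) * (fMatch k (n - 2 * b) ℓ : ℤ) :=
  SCount_eq_alternating_sum_general k n ℓ hk
end

section
/- For n ≥ 2 and 0 ≤ ℓ ≤ n with n - ℓ even, the numbers S_2(n,ℓ) of RNA secondary structures with exactly ℓ isolated vertices satisfy the two-term recursion (n-ℓ)(n-ℓ+2)·S_2(n,ℓ) − (n+ℓ)(n+ℓ-2)·S_2(n-2,ℓ) = 0. -/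
/-! Let `T = ∑ S₂(n, ℓ) xⁿ yˡ`. The last vertex `n` of a structure is either isolated or closes an
arc `(j, n)`, which splits the rest into a structure on `[1, j)` and one on the nonempty interval
`(j, n)`; hence `T = 1 + xyT + x²T(T - 1)`. Differentiating this quadratic implicitly with the
Euler operators `δ = x∂ₓ - y∂ᵧ` and `σ = x∂ₓ + y∂ᵧ`, which act on `xⁿyˡ` by `n - ℓ` and `n + ℓ`,
gives `δ(δT) + 2δT = x²(σ(σT) + 2σT)`, and comparing coefficients of `xⁿyˡ` is the recursion. -/

open Finset PowerSeries

section EulerRelation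

variable {R A : Type*} [CommRing R] [CommRing A] [Algebra R A] {x y T : A}

theorem euler_relation_of_functional_equation (δ σ : Derivation R A A)
    (hδx : δ x = x) (hδy : δ y = -y) (hσx : σ x = x) (hσy : σ y = y)
    (hT : T = 1 + x * y * T + x ^ 2 * T * (T - 1))
    (hW : IsUnit (2 * x ^ 2 * T - (1 - x * y + x ^ 2))) :
    δ (δ T) + 2 * δ T = x ^ 2 * (σ (σ T) + 2 * σ T) := by
  set W := 2 * x ^ 2 * T - (1 - x * y + x ^ 2) with hW_def
  have h2 : ∀ D : Derivation R A A, D 2 = 0 := fun D => by exact_mod_cast D.map_natCast 2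
  have hδ := congrArg δ hT
  have hσ := congrArg σ hT
  simp only [map_add, map_sub, Derivation.map_one_eq_zero, Derivation.leibniz,
    Derivation.leibniz_pow, smul_eq_mul, nsmul_eq_mul, hδx, hδy, hσx, hσy] at hδ hσ
  have hE : W * δ T = 2 * x ^ 2 * T * (1 - T) := by linear_combination -hδ
  have hF : W * σ T = 2 * x ^ 2 * T * (1 - T) - 2 * x * y * T := by linear_combination -hσ
  have hδE := congrArg δ hE
  have hσF := congrArg σ hF
  simp only [hW_def, map_add, map_sub, Derivation.map_one_eq_zero, h2, Derivation.leibniz,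
    Derivation.leibniz_pow, smul_eq_mul, nsmul_eq_mul, hδx, hδy, hσx, hσy] at hδE hσF
  have hEE : W * δ (δ T) =
      4 * x ^ 2 * T * (1 - T) + 4 * x ^ 2 * (1 - 2 * T) * δ T - 2 * x ^ 2 * δ T ^ 2 := by
    linear_combination hδE
  have hFF : W * σ (σ T) = 4 * x ^ 2 * T * (1 - T) - 4 * x * y * T
      + 4 * (x ^ 2 - 2 * x ^ 2 * T - x * y) * σ T - 2 * x ^ 2 * σ T ^ 2 := by
    linear_combination hσF
  rw [← sub_eq_zero, ← (hW.pow 3).mul_right_eq_zero]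
  -- Once `W * δ T` and `W * σ T` are eliminated, what is left is
  -- `8x²(1 - x²)T(1 - xy + x² - x²T)` times the functional equation.
  linear_combination W ^ 2 * hEE
    + (4 * x ^ 2 * (1 - 2 * T) * W - 2 * x ^ 2 * (W * δ T + 2 * x ^ 2 * T * (1 - T))
      + 2 * W ^ 2) * hE
    - x ^ 2 * (W ^ 2 * hFF + (4 * (x ^ 2 - 2 * x ^ 2 * T - x * y) * W
      - 2 * x ^ 2 * (W * σ T + 2 * x ^ 2 * T * (1 - T) - 2 * x * y * T) + 2 * W ^ 2) * hF)
    - 8 * x ^ 2 * (1 - x ^ 2) * T * (1 - x * y + x ^ 2 - x ^ 2 * T) * hT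

end EulerRelation

namespace PowerSeries

/-- The Euler operator `a x∂ₓ + b y∂ᵧ` on `ℚ⟦y⟧⟦x⟧`, where `x` is the outer variable. -/
noncomputable def bivariateEuler (a b : ℚ) : Derivation ℚ ℚ⟦X⟧⟦X⟧ ℚ⟦X⟧⟦X⟧ :=
  Derivation.mk'
    { toFun := fun f => mk fun n => mk fun l => (a * n + b * l) * coeff l (coeff n f)
      map_add' := fun f g => by ext; simp [mul_add]
      map_smul' := fun r f => by ext; simp; ring }
    (fun f g => by
      ext n l
      rw [smul_eq_mul, smul_eq_mul, mul_comm g]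
      simp only [LinearMap.coe_mk, AddHom.coe_mk, map_add, coeff_mul, coeff_mk, map_sum,
        Finset.mul_sum, ← Finset.sum_add_distrib]
      refine Finset.sum_congr rfl fun i hi => Finset.sum_congr rfl fun u hu => ?_
      rw [Finset.HasAntidiagonal.mem_antidiagonal] at hi hu
      rw [← hi, ← hu]
      push_cast
      ring)

@[simp]
theorem coeff_coeff_bivariateEuler (a b : ℚ) (f : ℚ⟦X⟧⟦X⟧) (n l : ℕ) :
    coeff l (coeff n (bivariateEuler a b f)) = (a * n + b * l) * coeff l (coeff n f) := by
  simp [bivariateEuler]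

theorem bivariateEuler_X (a b : ℚ) : bivariateEuler a b X = a • X := by
  ext n l
  rw [coeff_coeff_bivariateEuler]
  by_cases hn : n = 1 <;> by_cases hl : l = 0 <;> simp [coeff_X, coeff_one, hn, hl]

theorem bivariateEuler_C_X (a b : ℚ) : bivariateEuler a b (C X) = b • C X := by
  ext n l
  rw [coeff_coeff_bivariateEuler]
  by_cases hn : n = 0 <;> by_cases hl : l = 1 <;> simp [coeff_C, coeff_X, hn, hl]

end PowerSeries

namespace SecondaryStructure

variable {a b j : ℕ} {M L H : Finset (ℕ × ℕ)}

def ArcsCompatible (p q : ℕ × ℕ) : Prop :=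
  p.2 < q.1 ∨ q.2 < p.1 ∨ (p.1 < q.1 ∧ q.2 < p.2) ∨ (q.1 < p.1 ∧ p.2 < q.2)

/-- RNA secondary structures on the vertices of `[a, b)`: two arcs are compatible exactly when
they are vertex-disjoint and do not cross, and `p.1 + 2 ≤ p.2` excludes 1-arcs. -/
def IsStructureOn (a b : ℕ) (M : Finset (ℕ × ℕ)) : Prop :=
  (∀ p ∈ M, a ≤ p.1 ∧ p.1 + 2 ≤ p.2 ∧ p.2 < b) ∧ (M : Set (ℕ × ℕ)).Pairwise ArcsCompatible

theorem hasKCrossing_two_iff :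
    HasKCrossing 2 M ↔ ∃ p ∈ M, ∃ q ∈ M, p.1 < q.1 ∧ q.1 < p.2 ∧ p.2 < q.2 := by
  constructor
  · rintro ⟨f, hfM, h1, h2, h12⟩
    exact ⟨f 0, hfM 0, f 1, hfM 1, h1 Fin.zero_lt_one, h12 1 0, h2 Fin.zero_lt_one⟩
  · rintro ⟨p, hp, q, hq, h⟩
    refine ⟨![p, q], ?_, ?_, ?_, ?_⟩
    · simp [Fin.forall_fin_two, hp, hq]
    · simp [Fin.strictMono_iff_lt_succ, h.1]
    · simp [Fin.strictMono_iff_lt_succ, h.2.2]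
    · simp [Fin.forall_fin_two]
      omega

theorem isPartialMatching_and_iff_isStructureOn {n : ℕ} :
    IsPartialMatching n M ∧ KNoncrossing 2 M ∧ (∀ p ∈ M, p.2 ≠ p.1 + 1) ↔
      IsStructureOn 1 (n + 1) M := by
  simp only [IsPartialMatching, ArcsDisjoint, KNoncrossing, hasKCrossing_two_iff, IsStructureOn,
    ArcsCompatible, Set.Pairwise, mem_coe]
  push Not
  constructor
  · rintro ⟨⟨hb, hd⟩, hc, h1⟩
    refine ⟨fun p hp => ?_, fun p hp q hq hpq => ?_⟩
    · have := hb p hp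
      have := h1 p hp
      omega
    · have := hb p hp
      have := hb q hq
      have := hd p hp q hq hpq
      have := hc p hp q hq
      have := hc q hq p hp
      omega
  · rintro ⟨hb, hc⟩
    refine ⟨⟨fun p hp => ?_, fun p hp q hq hpq => ?_⟩, fun p hp q hq => ?_, fun p hp => ?_⟩
    · have := hb p hp
      omega
    · have := hb p hp
      have := hb q hq
      have := hc hp hq hpq
      omega
    · have := hb p hp
      have := hb q hq
      obtain rfl | hpq := eq_or_ne p q
      · omega
      · have := hc hp hq hpq
        omega
    · have := hb p hp
      omega

def vertices (M : Finset (ℕ × ℕ)) : Finset ℕ := M.biUnion fun p => {p.1, p.2}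

theorem IsStructureOn.card_vertices (hM : IsStructureOn a b M) : #(vertices M) = 2 * #M := by
  rw [vertices, card_biUnion, sum_const_nat fun p hp => card_pair (by have := hM.1 p hp; omega),
    mul_comm]
  intro p hp q hq hpq
  have hcompat := hM.2 hp hq hpq
  have := hM.1 p hp
  have := hM.1 q hq
  unfold ArcsCompatible at hcompat
  simp only [disjoint_insert_left, disjoint_insert_right, mem_insert, mem_singleton,
    disjoint_singleton]
  omega

theorem IsStructureOn.vertices_subset (hM : IsStructureOn a b M) : vertices M ⊆ Ico a b := by
  intro v hv
  simp only [vertices, mem_biUnion, mem_insert, mem_singleton] at hv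
  obtain ⟨p, hp, rfl | rfl⟩ := hv <;> have := hM.1 p hp <;> simp only [mem_Ico] <;> omega

theorem IsStructureOn.two_mul_card_le (hM : IsStructureOn a b M) : 2 * #M ≤ b - a := by
  rw [← hM.card_vertices, ← Nat.card_Ico]
  exact card_le_card hM.vertices_subset

theorem isolatedCount_eq {n : ℕ} (hM : IsStructureOn 1 (n + 1) M) :
    isolatedCount n M = n - 2 * #M := by
  have hiso : (Icc 1 n).filter (fun v => ∀ p ∈ M, p.1 ≠ v ∧ p.2 ≠ v) = Icc 1 n \ vertices M := by
    ext v
    simp only [vertices, mem_filter, mem_sdiff, mem_biUnion, mem_insert, mem_singleton,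
      not_exists, not_and, not_or]
    grind
  rw [isolatedCount, hiso,
    card_sdiff_of_subset (Ico_add_one_right_eq_Icc 1 n ▸ hM.vertices_subset), Nat.card_Icc,
    hM.card_vertices, Nat.add_sub_cancel]

theorem IsStructureOn.mono {a' b' : ℕ} (hM : IsStructureOn a b M) (hLM : L ⊆ M)
    (hL : ∀ p ∈ L, a' ≤ p.1 ∧ p.2 < b') : IsStructureOn a' b' L :=
  ⟨fun p hp => ⟨(hL p hp).1, (hM.1 p (hLM hp)).2.1, (hL p hp).2⟩, hM.2.mono (coe_subset.2 hLM)⟩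

theorem IsStructureOn.union {c : ℕ} (hL : IsStructureOn a b L) (hH : IsStructureOn b c H)
    (hab : a ≤ b) (hbc : b ≤ c) : IsStructureOn a c (L ∪ H) := by
  refine ⟨fun p hp => ?_, ?_⟩
  · rcases mem_union.1 hp with hp | hp
    · have := hL.1 p hp
      omega
    · have := hH.1 p hp
      omega
  · rw [coe_union, Set.pairwise_union]
    refine ⟨hL.2, hH.2, fun p hp q hq _ => ?_⟩
    have := hL.1 p hp
    have := hH.1 q hq
    unfold ArcsCompatible
    omega

theorem IsStructureOn.insert_arc (hM : IsStructureOn (a + 1) b M) (hab : a + 2 ≤ b) :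
    IsStructureOn a (b + 1) (insert (a, b) M) := by
  refine ⟨fun p hp => ?_, ?_⟩
  · rcases mem_insert.1 hp with rfl | hp
    · dsimp only
      omega
    · have := hM.1 p hp
      omega
  · rw [coe_insert, Set.pairwise_insert]
    refine ⟨hM.2, fun q hq _ => ?_⟩
    have := hM.1 q hq
    unfold ArcsCompatible
    dsimp only
    omega

theorem IsStructureOn.image {a' b' : ℕ} {f : ℕ → ℕ} (hM : IsStructureOn a b M)
    (hf : ∀ i, a ≤ i → f i + a = i + a') (hb : b' + a = b + a') :
    IsStructureOn a' b' (M.image (Prod.map f f)) := by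
  refine ⟨?_, ?_⟩
  · simp only [mem_image, forall_exists_index, and_imp]
    rintro _ q hq rfl
    have := hM.1 q hq
    have := hf q.1 (by omega)
    have := hf q.2 (by omega)
    simp only [Prod.map_fst, Prod.map_snd]
    omega
  · rw [coe_image]
    refine Set.Pairwise.image fun p hp q hq hpq => ?_
    have hcompat := hM.2 hp hq hpq
    have := hM.1 p hp
    have := hM.1 q hq
    have := hf p.1 (by omega)
    have := hf p.2 (by omega)
    have := hf q.1 (by omega)
    have := hf q.2 (by omega)
    unfold Function.onFun ArcsCompatible at *
    simp only [Prod.map_fst, Prod.map_snd]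
    omega

theorem IsStructureOn.eq_or_left_or_inside (hM : IsStructureOn a (b + 1) M) (hjb : (j, b) ∈ M)
    {p : ℕ × ℕ} (hp : p ∈ M) : p = (j, b) ∨ p.2 < j ∨ (j < p.1 ∧ p.2 < b) := by
  obtain rfl | hne := eq_or_ne p (j, b)
  · exact Or.inl rfl
  have hcompat := hM.2 hp hjb hne
  have := hM.1 p hp
  unfold ArcsCompatible at hcompat
  omega

theorem IsStructureOn.filter_snd_lt (hM : IsStructureOn a b M) :
    IsStructureOn a j (M.filter (·.2 < j)) :=
  hM.mono (filter_subset _ _) fun p hp => by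
    obtain ⟨hp, hpj⟩ := mem_filter.1 hp
    have := hM.1 p hp
    omega

theorem IsStructureOn.filter_lt_fst (hM : IsStructureOn a (b + 1) M) (hjb : (j, b) ∈ M) :
    IsStructureOn (j + 1) b (M.filter (j < ·.1)) :=
  hM.mono (filter_subset _ _) fun p hp => by
    obtain ⟨hp, hjp⟩ := mem_filter.1 hp
    have := hM.1 p hp
    rcases hM.eq_or_left_or_inside hjb hp with rfl | h | h <;> omega

theorem IsStructureOn.filter_union_insert (hM : IsStructureOn a (b + 1) M) (hjb : (j, b) ∈ M) :
    M.filter (·.2 < j) ∪ insert (j, b) (M.filter (j < ·.1)) = M := by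
  ext p
  simp only [mem_union, mem_insert, mem_filter]
  constructor
  · rintro (⟨hp, -⟩ | rfl | ⟨hp, -⟩)
    · exact hp
    · exact hjb
    · exact hp
  · intro hp
    rcases hM.eq_or_left_or_inside hjb hp with h | h | h
    · exact Or.inr (Or.inl h)
    · exact Or.inl ⟨hp, h⟩
    · exact Or.inr (Or.inr ⟨hp, h.1⟩)

theorem filter_snd_lt_union_insert (hL : IsStructureOn a j L) (hH : IsStructureOn (j + 1) b H)
    (hjb : j ≤ b) : (L ∪ insert (j, b) H).filter (·.2 < j) = L := by
  rw [filter_union, filter_insert, if_neg (by omega),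
    filter_true_of_mem fun p hp => (hL.1 p hp).2.2,
    filter_false_of_mem fun p hp => by have := hH.1 p hp; omega, union_empty]

theorem filter_lt_fst_union_insert (hL : IsStructureOn a j L) (hH : IsStructureOn (j + 1) b H) :
    (L ∪ insert (j, b) H).filter (j < ·.1) = H := by
  rw [filter_union, filter_insert, if_neg (lt_irrefl j),
    filter_false_of_mem fun p hp => by have := hL.1 p hp; omega,
    filter_true_of_mem fun p hp => by have := hH.1 p hp; omega, empty_union]

theorem card_union_insert (hL : IsStructureOn a j L) (hH : IsStructureOn (j + 1) b H) :
    #(L ∪ insert (j, b) H) = #L + #H + 1 := by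
  have hjbH : (j, b) ∉ H := fun hjbH => by have := hH.1 _ hjbH; dsimp only at this; omega
  have hdisj : Disjoint L (insert (j, b) H) := by
    refine disjoint_left.2 fun p hpL hp => ?_
    have := hL.1 p hpL
    rcases mem_insert.1 hp with rfl | hp
    · dsimp only at this
      omega
    · have := hH.1 p hp
      omega
  rw [card_union_of_disjoint hdisj, card_insert_of_notMem hjbH, add_assoc]

open Classical in
noncomputable def structures (a b : ℕ) : Finset (Finset (ℕ × ℕ)) :=
  ((Ico a b ×ˢ Ico a b).powerset).filter (IsStructureOn a b)

theorem mem_structures : M ∈ structures a b ↔ IsStructureOn a b M := by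
  simp only [structures, mem_filter, mem_powerset, and_iff_right_iff_imp]
  intro hM p hp
  have := hM.1 p hp
  simp only [mem_product, mem_Ico]
  omega

/-- The structures on `[a, b)` counted by isolated vertices: one with `k` arcs has
`b - a - 2k` of them. -/
noncomputable def isolatedGF (a b : ℕ) : ℚ⟦X⟧ :=
  ∑ M ∈ structures a b, X ^ (b - a - 2 * #M)

theorem isolatedGF_self (a : ℕ) : isolatedGF a a = 1 := by
  have hS : structures a a = {∅} := by
    ext M
    rw [mem_structures, mem_singleton]
    constructor
    · exact fun h => eq_empty_of_forall_notMem fun p hp => by have := h.1 p hp; omega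
    · rintro rfl
      exact ⟨by simp, by simp⟩
  simp [isolatedGF, hS]

theorem isolatedGF_add (a b k : ℕ) : isolatedGF (a + k) (b + k) = isolatedGF a b := by
  symm
  refine sum_nbij' (fun M => M.image (Prod.map (· + k) (· + k)))
    (fun M => M.image (Prod.map (· - k) (· - k))) (fun M hM => ?_) (fun M hM => ?_)
    (fun M _ => ?_) (fun M hM => ?_) (fun M _ => ?_)
  · exact mem_structures.2 ((mem_structures.1 hM).image (fun i _ => by omega) (by omega))
  · exact mem_structures.2 ((mem_structures.1 hM).image (fun i _ => by omega) (by omega))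
  · rw [image_image]
    exact (image_congr fun p _ => by ext <;> simp).trans image_id
  · rw [image_image]
    refine (image_congr fun p hp => ?_).trans image_id
    have := (mem_structures.1 hM).1 p hp
    ext <;> simp <;> omega
  · rw [card_image_of_injective _ ((add_left_injective k).prodMap (add_left_injective k))]
    congr 1
    omega

theorem isolatedGF_eq_sub (h : a ≤ b) : isolatedGF a b = isolatedGF 0 (b - a) := by
  simpa [Nat.sub_add_cancel h] using isolatedGF_add 0 (b - a) a

theorem coeff_isolatedGF (n l : ℕ) : coeff l (isolatedGF 0 n) = SCount 2 n l := by
  have hcount : SCount 2 n l = #{M ∈ structures 1 (n + 1) | l = n + 1 - 1 - 2 * #M} := by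
    rw [SCount, ← Nat.card_eq_finsetCard]
    refine Nat.card_congr (Equiv.subtypeEquivRight fun M => ?_)
    rw [mem_filter, mem_structures, ← isPartialMatching_and_iff_isStructureOn]
    constructor
    · rintro ⟨h1, h2, h3, rfl⟩
      rw [isolatedCount_eq (isPartialMatching_and_iff_isStructureOn.1 ⟨h1, h2, h3⟩)]
      exact ⟨⟨h1, h2, h3⟩, by omega⟩
    · rintro ⟨h, rfl⟩
      rw [isolatedCount_eq (isPartialMatching_and_iff_isStructureOn.1 h)]
      exact ⟨h.1, h.2.1, h.2.2, by omega⟩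
  rw [← isolatedGF_add 0 n 1, zero_add, isolatedGF, map_sum]
  simp only [coeff_X_pow, sum_boole, hcount]

theorem sum_structures_with_arc (haj : a ≤ j) (hjb : j + 2 ≤ b) :
    ∑ M ∈ (structures a (b + 1)).filter ((j, b) ∈ ·), (X : ℚ⟦X⟧) ^ (b + 1 - a - 2 * #M) =
      isolatedGF a j * isolatedGF (j + 1) b := by
  rw [isolatedGF, isolatedGF, sum_mul_sum, ← sum_product', eq_comm]
  refine sum_nbij' (fun LH => LH.1 ∪ insert (j, b) LH.2)
    (fun M => (M.filter (·.2 < j), M.filter (j < ·.1))) (fun LH h => ?_) (fun M h => ?_)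
    (fun LH h => ?_) (fun M h => ?_) (fun LH h => ?_) <;>
    simp only [mem_product, mem_filter, mem_structures] at h ⊢
  · exact ⟨h.1.union (h.2.insert_arc hjb) haj (by omega), by simp⟩
  · exact ⟨h.1.filter_snd_lt, h.1.filter_lt_fst h.2⟩
  · exact Prod.ext (filter_snd_lt_union_insert h.1 h.2 (by omega))
      (filter_lt_fst_union_insert h.1 h.2)
  · exact h.1.filter_union_insert h.2
  · rw [← pow_add, card_union_insert h.1 h.2]
    have := h.1.two_mul_card_le
    have := h.2.two_mul_card_le
    congr 1
    omega

theorem isolatedGF_succ (hab : a ≤ b) :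
    isolatedGF a (b + 1) =
      X * isolatedGF a b + ∑ j ∈ Ico a (b - 1), isolatedGF a j * isolatedGF (j + 1) b := by
  have hfree : (structures a (b + 1)).filter (fun M => ∀ p ∈ M, p.2 < b) = structures a b := by
    ext M
    simp only [mem_filter, mem_structures]
    exact ⟨fun h => h.1.mono subset_rfl fun p hp => ⟨(h.1.1 p hp).1, h.2 p hp⟩,
      fun h => ⟨h.mono subset_rfl fun p hp => by have := h.1 p hp; omega,
        fun p hp => (h.1 p hp).2.2⟩⟩
  have hmatched : (structures a (b + 1)).filter (fun M => ¬ ∀ p ∈ M, p.2 < b) =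
      (Ico a (b - 1)).biUnion fun j => (structures a (b + 1)).filter ((j, b) ∈ ·) := by
    ext M
    simp only [mem_filter, mem_biUnion, mem_Ico, mem_structures]
    push Not
    constructor
    · rintro ⟨hM, p, hp, hbp⟩
      have := hM.1 p hp
      refine ⟨p.1, ⟨by omega, by omega⟩, hM, ?_⟩
      rwa [show (p.1, b) = p from Prod.ext rfl (by omega)]
    · rintro ⟨j, -, hM, hjb⟩
      exact ⟨hM, (j, b), hjb, le_rfl⟩
  have hdisj : (Ico a (b - 1) : Set ℕ).PairwiseDisjoint
      fun j => (structures a (b + 1)).filter ((j, b) ∈ ·) := by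
    intro j hj j' hj' hjj'
    rw [coe_Ico, Set.mem_Ico] at hj hj'
    refine disjoint_filter.2 fun M hM hjM hj'M => ?_
    have := (mem_structures.1 hM).2 hjM hj'M (by simpa using hjj')
    unfold ArcsCompatible at this
    omega
  rw [isolatedGF, ← sum_filter_add_sum_filter_not _ (fun M => ∀ p ∈ M, p.2 < b), hfree,
    hmatched, sum_biUnion hdisj, isolatedGF, mul_sum]
  congr 1
  · refine sum_congr rfl fun M hM => ?_
    have := (mem_structures.1 hM).two_mul_card_le
    rw [← pow_succ']
    congr 1
    omega
  · refine sum_congr rfl fun j hj => ?_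
    rw [mem_Ico] at hj
    exact sum_structures_with_arc hj.1 (by omega)

noncomputable def structureGF : ℚ⟦X⟧⟦X⟧ := mk fun n => isolatedGF 0 n

theorem coeff_coeff_structureGF (n l : ℕ) : coeff l (coeff n structureGF) = SCount 2 n l := by
  rw [structureGF, coeff_mk, coeff_isolatedGF]

theorem structureGF_eq_one_add :
    structureGF = 1 + X * C X * structureGF + X ^ 2 * structureGF * (structureGF - 1) := by
  have hcoeff : ∀ n, coeff n structureGF = isolatedGF 0 n := fun n => coeff_mk _ _
  rw [show (1 : ℚ⟦X⟧⟦X⟧) + X * C X * structureGF + X ^ 2 * structureGF * (structureGF - 1) =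
    1 + X * (C X * structureGF) + X ^ 2 * (structureGF * structureGF - structureGF) by ring]
  ext1 n
  rcases n with _ | _ | m
  · simp [hcoeff, isolatedGF_self]
  · simp [hcoeff, isolatedGF_succ, isolatedGF_self, coeff_X_pow_mul']
  · rw [map_add, map_add, coeff_one, if_neg (by omega), zero_add, coeff_succ_X_mul, coeff_C_mul,
      coeff_X_pow_mul', if_pos (by omega), show m + 1 + 1 - 2 = m by omega, map_sub, coeff_mul,
      Nat.sum_antidiagonal_eq_sum_range_succ_mk, sum_range_succ]
    simp only [hcoeff, Nat.sub_self, isolatedGF_self, mul_one, add_sub_cancel_right]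
    rw [isolatedGF_succ (Nat.zero_le _), Nat.Ico_zero_eq_range, Nat.add_sub_cancel]
    congr 1
    refine sum_congr rfl fun j hj => ?_
    rw [isolatedGF_eq_sub (a := j + 1) (by rw [mem_range] at hj; omega)]
    congr 2
    omega

theorem isUnit_two_mul_X_sq_mul_structureGF_sub :
    IsUnit (2 * X ^ 2 * structureGF - (1 - X * C X + X ^ 2) : ℚ⟦X⟧⟦X⟧) := by
  rw [isUnit_iff_constantCoeff]
  simp

end SecondaryStructure

open SecondaryStructure

theorem SCount_two_recursion_general (n ℓ : ℕ) (hn : 2 ≤ n) :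
    ((n : ℤ) - ℓ) * ((n : ℤ) - ℓ + 2) * (SCount 2 n ℓ : ℤ) -
      ((n : ℤ) + ℓ) * ((n : ℤ) + ℓ - 2) * (SCount 2 (n - 2) ℓ : ℤ) = 0 := by
  obtain ⟨m, rfl⟩ : ∃ m, n = m + 2 := ⟨n - 2, by omega⟩
  have key := congrArg (fun f => coeff ℓ (coeff (m + 2) f))
    (euler_relation_of_functional_equation (bivariateEuler 1 (-1)) (bivariateEuler 1 1)
      (by simp [bivariateEuler_X]) (by simp [bivariateEuler_C_X]) (by simp [bivariateEuler_X])
      (by simp [bivariateEuler_C_X]) structureGF_eq_one_add isUnit_two_mul_X_sq_mul_structureGF_sub)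
  simp only [two_mul, map_add, coeff_coeff_bivariateEuler, coeff_X_pow_mul,
    coeff_coeff_structureGF] at key
  rw [Nat.add_sub_cancel]
  qify
  push_cast at key ⊢
  linear_combination key

/-- For `n ≥ 2`, `0 ≤ ℓ ≤ n`, `n - ℓ` even:
`(n-ℓ)(n-ℓ+2)·S₂(n,ℓ) − (n+ℓ)(n+ℓ-2)·S₂(n-2,ℓ) = 0`. -/
theorem SCount_two_recursion (n ℓ : ℕ) (hn : 2 ≤ n) (hl : ℓ ≤ n)
    (he : Even (n - ℓ)) :
    ((n : ℤ) - ℓ) * ((n : ℤ) - ℓ + 2) * (SCount 2 n ℓ : ℤ) -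
      ((n : ℤ) + ℓ) * ((n : ℤ) + ℓ - 2) * (SCount 2 (n - 2) ℓ : ℤ) = 0 :=
  SCount_two_recursion_general n ℓ hn
end

section
/- For n ≥ 3 and b ≥ 1, the number of ways to select b pairwise vertex-disjoint cyclic 1-arcs over {1,…,n} (where the cyclic 1-arcs are the pairs (i,i+1) for 1 ≤ i ≤ n-1 together with (n,1); equivalently, the number of matchings of size b in the cycle on n vertices) equals C(n-b-1, b-1) + C(n-b, b), where C(·,·) is the binomial coefficient. -/
/-- `p` is a cyclic 1-arc over `{1,…,n}`: `p = (i, i+1)` with `1 ≤ i ≤ n-1`,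
or `p = (n, 1)`. -/
def IsCyclicOneArc (n : ℕ) (p : ℕ × ℕ) : Prop :=
  (1 ≤ p.1 ∧ p.1 + 1 ≤ n ∧ p.2 = p.1 + 1) ∨ p = (n, 1)


open Finset


def NC (m b : ℕ) : ℕ :=
  ((range m).powerset.filter (fun S => S.card = b ∧ ∀ i ∈ S, i + 1 ∉ S)).card

lemma nc_zero (b : ℕ) : NC 0 b = if b = 0 then 1 else 0 := by
  rcases b with _ | b
  · decide
  · rw [if_neg (by omega)]
    simp [NC, filter_singleton]

lemma nc_b0 (m : ℕ) : NC m 0 = 1 := by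
  have h : ((range m).powerset.filter (fun S => S.card = 0 ∧ ∀ i ∈ S, i + 1 ∉ S)) = {∅} := by
    ext S
    simp only [mem_filter, mem_powerset, mem_singleton, Finset.card_eq_zero]
    constructor
    · rintro ⟨_, rfl, _⟩; rfl
    · rintro rfl; simp
  rw [NC, h, card_singleton]

lemma nc_succ (m b : ℕ) (hb : 1 ≤ b) : NC (m + 1) b = NC m b + NC (m - 1) (b - 1) := by
  classical
  have hsplit := Finset.card_filter_add_card_filter_not
    (s := (range (m+1)).powerset.filter (fun S => S.card = b ∧ ∀ i ∈ S, i + 1 ∉ S))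
    (p := fun S => m ∉ S)
  simp only [not_not] at hsplit
  have h1 : ((((range (m+1)).powerset.filter (fun S => S.card = b ∧ ∀ i ∈ S, i + 1 ∉ S))).filter
      (fun S => m ∉ S)) = ((range m).powerset.filter (fun S => S.card = b ∧ ∀ i ∈ S, i + 1 ∉ S)) := by
    ext S
    simp only [mem_filter, mem_powerset]
    constructor
    · rintro ⟨⟨hsub, hp⟩, hm⟩
      refine ⟨fun i hi => ?_, hp⟩
      have h3 := hsub hi
      simp only [mem_range] at h3 ⊢
      rcases Nat.lt_succ_iff_lt_or_eq.mp h3 with h | h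
      · exact h
      · exact absurd (h ▸ hi) hm
    · rintro ⟨hsub, hp⟩
      refine ⟨⟨fun i hi => ?_, hp⟩, fun hm => ?_⟩
      · have := hsub hi; simp only [mem_range] at this ⊢; omega
      · have := hsub hm; simp at this
  have h2 : ((((range (m+1)).powerset.filter (fun S => S.card = b ∧ ∀ i ∈ S, i + 1 ∉ S))).filter
      (fun S => m ∈ S)).card =
      ((range (m-1)).powerset.filter (fun S => S.card = b - 1 ∧ ∀ i ∈ S, i + 1 ∉ S)).card := by
    refine Finset.card_bij' (fun S _ => S.erase m) (fun S _ => insert m S) ?hi ?hj ?left ?right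
    case hi =>
      intro S hS
      simp only [mem_filter, mem_powerset] at hS ⊢
      obtain ⟨⟨hsub, hcard, hnc⟩, hm⟩ := hS
      refine ⟨fun i hi => ?_, ?_, fun i hi => ?_⟩
      · rw [mem_erase] at hi
        have h3 := hsub hi.2
        simp only [mem_range] at h3 ⊢
        have : i ≠ m - 1 := by
          intro h
          have hm1 : 1 ≤ m := by omega
          have h4 : i + 1 = m := by omega
          exact hnc i hi.2 (h4 ▸ hm)
        omega
      · rw [card_erase_of_mem hm, hcard]
      · rw [mem_erase] at hi
        intro hcon
        rw [mem_erase] at hcon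
        exact hnc i hi.2 hcon.2
    case hj =>
      intro S hS
      simp only [mem_filter, mem_powerset] at hS ⊢
      obtain ⟨hsub, hcard, hnc⟩ := hS
      have hmS : m ∉ S := by
        intro h; have := hsub h; simp only [mem_range] at this; omega
      refine ⟨⟨fun i hi => ?_, ?_, fun i hi => ?_⟩, mem_insert_self m S⟩
      · rw [mem_insert] at hi
        simp only [mem_range]
        rcases hi with rfl | hi
        · omega
        · have := hsub hi; simp only [mem_range] at this; omega
      · rw [card_insert_of_notMem hmS, hcard]; omega
      · rw [mem_insert] at hi
        intro hcon
        rw [mem_insert] at hcon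
        rcases hi with rfl | hi
        · rcases hcon with h | h
          · omega
          · have := hsub h; simp only [mem_range] at this; omega
        · rcases hcon with h | h
          · have := hsub hi; simp only [mem_range] at this; omega
          · exact hnc i hi h
    case left =>
      intro S hS
      simp only [mem_filter] at hS
      exact insert_erase hS.2
    case right =>
      intro S hS
      simp only [mem_filter, mem_powerset] at hS
      have hmS : m ∉ S := by
        intro h; have := hS.1 h; simp only [mem_range] at this; omega
      exact erase_insert hmS
  rw [NC, ← hsplit, h1, h2, NC, NC]

lemma nc_formula (m b : ℕ) : NC m b = (m + 1 - b).choose b := by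
  induction m using Nat.strong_induction_on generalizing b with
  | _ m ih =>
    rcases Nat.eq_zero_or_pos b with rfl | hb
    · simp [nc_b0]
    rcases m with _ | m
    · rw [nc_zero, if_neg (by omega)]
      rcases b with _ | b
      · omega
      · rcases b with _ | b <;> simp [Nat.choose_eq_zero_of_lt]
    · rw [nc_succ m b hb, ih m (by omega), ih (m-1) (by omega)]
      rcases Nat.lt_or_ge (m + 1) b with h | h
      · rw [Nat.choose_eq_zero_of_lt (by omega), Nat.choose_eq_zero_of_lt (by omega),
          Nat.choose_eq_zero_of_lt (by omega)]
      · rcases m with _ | m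
        · have hb1 : b = 1 := by omega
          subst hb1; norm_num
        · have e1 : m + 1 + 1 + 1 - b = (m + 1 + 1 - b) + 1 := by omega
          have e2 : m + 1 - 1 + 1 - (b - 1) = m + 1 + 1 - b := by omega
          rw [e1, e2]
          rcases b with _ | b'
          · omega
          · rw [Nat.choose_succ_succ]
            simp only [Nat.succ_sub_one, Nat.succ_eq_add_one]
            omega

theorem aux_cycle_count (n b : ℕ) (hn : 3 ≤ n) (hb : 1 ≤ b) :
    Nat.card {A : Finset (ℕ × ℕ) //
        A.card = b ∧ (∀ p ∈ A, IsCyclicOneArc n p) ∧ ArcsDisjoint A} =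
      NC (n-3) (b-1) + NC (n-1) b := by
  classical
  set E : Finset (ℕ × ℕ) := ((Finset.Icc 1 (n-1)).image fun i => (i, i+1)) ∪ {(n,1)} with hE
  have hmemE : ∀ p : ℕ × ℕ, p ∈ E ↔ IsCyclicOneArc n p := by
    rintro ⟨x, y⟩
    simp only [hE, mem_union, mem_image, mem_singleton, Finset.mem_Icc, IsCyclicOneArc,
      Prod.mk.injEq]
    constructor
    · rintro (⟨i, ⟨h1, h2⟩, rfl, rfl⟩ | ⟨rfl, rfl⟩)
      · left; exact ⟨h1, by omega, rfl⟩
      · right; exact ⟨rfl, rfl⟩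
    · rintro (⟨h1, h2, h3⟩ | ⟨rfl, rfl⟩)
      · left; exact ⟨x, ⟨h1, by omega⟩, rfl, h3.symm⟩
      · right; exact ⟨rfl, rfl⟩
  set F : Finset (Finset (ℕ × ℕ)) := E.powerset.filter
    (fun A => A.card = b ∧ (∀ p ∈ A, IsCyclicOneArc n p) ∧ ArcsDisjoint A) with hF
  have hcard : Nat.card {A : Finset (ℕ × ℕ) //
      A.card = b ∧ (∀ p ∈ A, IsCyclicOneArc n p) ∧ ArcsDisjoint A} = F.card := by
    rw [← Nat.card_eq_finsetCard F]
    apply Nat.card_congr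
    apply Equiv.subtypeEquivRight
    intro A
    simp only [hF, mem_filter, mem_powerset]
    constructor
    · intro h; exact ⟨fun p hp => (hmemE p).2 (h.2.1 p hp), h⟩
    · tauto
  rw [hcard]
  have hsplit := Finset.card_filter_add_card_filter_not
    (s := F) (p := fun A => (n,1) ∈ A)
  rw [← hsplit]
  congr 1
  -- Part 2 first: matchings containing (n,1)
  · rw [NC]
    refine Finset.card_bij' (fun A _ => (A.erase (n,1)).image (fun p => p.1 - 2))
      (fun S _ => insert (n,1) (S.image (fun i => (i+2, i+3)))) ?_ ?_ ?_ ?_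
    · intro A hA
      simp only [mem_filter, mem_powerset, hF] at hA
      obtain ⟨⟨hsub, hcardA, hcyc, hdisj⟩, hmem⟩ := hA
      have hform : ∀ p ∈ A.erase (n,1), p.2 = p.1 + 1 ∧ 2 ≤ p.1 ∧ p.1 ≤ n - 2 := by
        intro p hp
        rw [mem_erase] at hp
        obtain ⟨hne, hpA⟩ := hp
        rcases hcyc p hpA with ⟨h1, h2, h3⟩ | h
        · have hd := hdisj p hpA (n,1) hmem hne
          refine ⟨h3, ?_, ?_⟩ <;> omega
        · exact absurd h hne
      simp only [mem_filter, mem_powerset]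
      refine ⟨?_, ?_, ?_⟩
      · intro q hq
        simp only [mem_image] at hq
        obtain ⟨p, hp, rfl⟩ := hq
        obtain ⟨h1, h2, h3⟩ := hform p hp
        have hlt : p.1 - 2 < n - 3 := by omega
        simp only [Finset.mem_range]
        omega
      · rw [Finset.card_image_of_injOn, card_erase_of_mem hmem, hcardA]
        intro p hp q hq hpq
        have hpq' : p.1 - 2 = q.1 - 2 := hpq
        obtain ⟨hp1, hp2, hp3⟩ := hform p hp
        obtain ⟨hq1, hq2, hq3⟩ := hform q hq
        have : p.1 = q.1 := by omega
        have h2 : p.2 = q.2 := by omega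
        exact Prod.ext this h2
      · intro i hi hcon
        simp only [mem_image] at hi hcon
        obtain ⟨p, hp, hp'⟩ := hi
        obtain ⟨q, hq, hq'⟩ := hcon
        obtain ⟨hp1, hp2, hp3⟩ := hform p hp
        obtain ⟨hq1, hq2, hq3⟩ := hform q hq
        have hq1' : q.1 = p.1 + 1 := by omega
        have hne : p ≠ q := by
          intro h; rw [h] at hq1'; omega
        have := (hdisj p (mem_of_mem_erase hp) q (mem_of_mem_erase hq) hne).2.2.1
        omega
    · intro S hS
      simp only [mem_filter, mem_powerset, mem_range] at hS
      obtain ⟨hsub, hcardS, hnc⟩ := hS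
      have hbd : ∀ i ∈ S, i < n - 3 := fun i hi => mem_range.mp (hsub hi)
      have hnotin : (n, 1) ∉ S.image (fun i => (i+2, i+3)) := by
        simp only [mem_image, Prod.mk.injEq, not_exists]
        rintro i ⟨hi, h1, h2⟩; omega
      simp only [mem_filter, mem_powerset, hF]
      refine ⟨⟨?_, ?_, ?_, ?_⟩, mem_insert_self _ _⟩
      · intro p hp
        rw [mem_insert] at hp
        rcases hp with rfl | hp
        · rw [hmemE]; right; rfl
        · simp only [mem_image] at hp
          obtain ⟨i, hi, rfl⟩ := hp
          rw [hmemE]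
          left
          exact ⟨by omega, by have := hbd i hi; omega, rfl⟩
      · rw [card_insert_of_notMem hnotin, Finset.card_image_of_injOn, hcardS]
        · omega
        · intro i _ j _ h
          simpa using congrArg Prod.fst h
      · intro p hp
        rw [mem_insert] at hp
        rcases hp with rfl | hp
        · right; rfl
        · simp only [mem_image] at hp
          obtain ⟨i, hi, rfl⟩ := hp
          left
          exact ⟨by omega, by have := hbd i hi; omega, rfl⟩
      · intro p hp q hq hne
        rw [mem_insert] at hp hq
        rcases hp with rfl | hp <;> rcases hq with rfl | hq
        · exact absurd rfl hne
        · simp only [mem_image] at hq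
          obtain ⟨j, hj, rfl⟩ := hq
          have := hbd j hj
          refine ⟨by omega, by omega, by omega, by omega⟩
        · simp only [mem_image] at hp
          obtain ⟨i, hi, rfl⟩ := hp
          have := hbd i hi
          refine ⟨by omega, by omega, by omega, by omega⟩
        · simp only [mem_image] at hp hq
          obtain ⟨i, hi, rfl⟩ := hp
          obtain ⟨j, hj, rfl⟩ := hq
          have hij : i ≠ j := by
            intro h; subst h; exact hne rfl
          have h1 : i ≠ j + 1 := fun h => hnc j hj (h ▸ hi)
          have h2 : j ≠ i + 1 := fun h => hnc i hi (h ▸ hj)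
          refine ⟨by omega, by omega, by omega, by omega⟩
    · intro A hA
      simp only [mem_filter, mem_powerset, hF] at hA
      obtain ⟨⟨hsub, hcardA, hcyc, hdisj⟩, hmem⟩ := hA
      have hform : ∀ p ∈ A.erase (n,1), p.2 = p.1 + 1 ∧ 2 ≤ p.1 := by
        intro p hp
        rw [mem_erase] at hp
        obtain ⟨hne, hpA⟩ := hp
        rcases hcyc p hpA with ⟨h1, h2, h3⟩ | h
        · have hd := hdisj p hpA (n,1) hmem hne
          exact ⟨h3, by omega⟩
        · exact absurd h hne
      rw [Finset.image_image]
      have himg : (A.erase (n,1)).image ((fun i => (i+2, i+3)) ∘ (fun p : ℕ × ℕ => p.1 - 2)) =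
          A.erase (n,1) := by
        ext q
        simp only [mem_image, Function.comp]
        constructor
        · rintro ⟨p, hp, rfl⟩
          obtain ⟨h1, h2⟩ := hform p hp
          have : (p.1 - 2 + 2, p.1 - 2 + 3) = p := Prod.ext (by omega) (by omega)
          rw [this]; exact hp
        · intro hq
          obtain ⟨h1, h2⟩ := hform q hq
          exact ⟨q, hq, Prod.ext (by omega) (by omega)⟩
      rw [himg, insert_erase hmem]
    · intro S hS
      simp only [mem_filter, mem_powerset] at hS
      have hnotin : (n, 1) ∉ S.image (fun i => (i+2, i+3)) := by
        simp only [mem_image, Prod.mk.injEq, not_exists]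
        rintro i ⟨hi, h1, h2⟩; omega
      rw [erase_insert hnotin, Finset.image_image]
      have : ((fun p : ℕ × ℕ => p.1 - 2) ∘ (fun i => (i+2, i+3))) = id := by
        funext i; simp
      rw [this, Finset.image_id]
  -- Part 1: matchings avoiding (n,1)
  · rw [NC]
    refine Finset.card_bij' (fun A _ => A.image (fun p => p.1 - 1))
      (fun S _ => S.image (fun i => (i+1, i+2))) ?_ ?_ ?_ ?_
    · intro A hA
      simp only [mem_filter, mem_powerset, hF] at hA
      obtain ⟨⟨hsub, hcardA, hcyc, hdisj⟩, hmem⟩ := hA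
      have hform : ∀ p ∈ A, p.2 = p.1 + 1 ∧ 1 ≤ p.1 ∧ p.1 ≤ n - 1 := by
        intro p hpA
        rcases hcyc p hpA with ⟨h1, h2, h3⟩ | h
        · exact ⟨h3, h1, by omega⟩
        · exact absurd (h ▸ hpA) hmem
      simp only [mem_filter, mem_powerset]
      refine ⟨?_, ?_, ?_⟩
      · intro q hq
        simp only [mem_image] at hq
        obtain ⟨p, hp, rfl⟩ := hq
        obtain ⟨h1, h2, h3⟩ := hform p hp
        have hlt : p.1 - 1 < n - 1 := by omega
        simp only [Finset.mem_range]
        omega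
      · rw [Finset.card_image_of_injOn, hcardA]
        intro p hp q hq hpq
        have hpq' : p.1 - 1 = q.1 - 1 := hpq
        obtain ⟨hp1, hp2, hp3⟩ := hform p hp
        obtain ⟨hq1, hq2, hq3⟩ := hform q hq
        have : p.1 = q.1 := by omega
        exact Prod.ext this (by omega)
      · intro i hi hcon
        simp only [mem_image] at hi hcon
        obtain ⟨p, hp, hp'⟩ := hi
        obtain ⟨q, hq, hq'⟩ := hcon
        obtain ⟨hp1, hp2, hp3⟩ := hform p hp
        obtain ⟨hq1, hq2, hq3⟩ := hform q hq
        have hq1' : q.1 = p.1 + 1 := by omega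
        have hne : p ≠ q := by
          intro h; rw [h] at hq1'; omega
        have := (hdisj p hp q hq hne).2.2.1
        omega
    · intro S hS
      simp only [mem_filter, mem_powerset] at hS
      obtain ⟨hsub, hcardS, hnc⟩ := hS
      have hbd : ∀ i ∈ S, i < n - 1 := fun i hi => mem_range.mp (hsub hi)
      have hnotin : (n, 1) ∉ S.image (fun i => (i+1, i+2)) := by
        simp only [mem_image, Prod.mk.injEq, not_exists]
        rintro i ⟨hi, h1, h2⟩; omega
      simp only [mem_filter, mem_powerset, hF]
      refine ⟨⟨?_, ?_, ?_, ?_⟩, hnotin⟩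
      · intro p hp
        simp only [mem_image] at hp
        obtain ⟨i, hi, rfl⟩ := hp
        rw [hmemE]
        left
        exact ⟨by omega, by have := hbd i hi; omega, rfl⟩
      · rw [Finset.card_image_of_injOn, hcardS]
        intro i _ j _ h
        simpa using congrArg Prod.fst h
      · intro p hp
        simp only [mem_image] at hp
        obtain ⟨i, hi, rfl⟩ := hp
        left
        exact ⟨by omega, by have := hbd i hi; omega, rfl⟩
      · intro p hp q hq hne
        simp only [mem_image] at hp hq
        obtain ⟨i, hi, rfl⟩ := hp
        obtain ⟨j, hj, rfl⟩ := hq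
        have hij : i ≠ j := by
          intro h; subst h; exact hne rfl
        have h1 : i ≠ j + 1 := fun h => hnc j hj (h ▸ hi)
        have h2 : j ≠ i + 1 := fun h => hnc i hi (h ▸ hj)
        refine ⟨by omega, by omega, by omega, by omega⟩
    · intro A hA
      simp only [mem_filter, mem_powerset, hF] at hA
      obtain ⟨⟨hsub, hcardA, hcyc, hdisj⟩, hmem⟩ := hA
      have hform : ∀ p ∈ A, p.2 = p.1 + 1 ∧ 1 ≤ p.1 := by
        intro p hpA
        rcases hcyc p hpA with ⟨h1, h2, h3⟩ | h
        · exact ⟨h3, h1⟩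
        · exact absurd (h ▸ hpA) hmem
      rw [Finset.image_image]
      ext q
      simp only [mem_image, Function.comp]
      constructor
      · rintro ⟨p, hp, rfl⟩
        obtain ⟨h1, h2⟩ := hform p hp
        have : (p.1 - 1 + 1, p.1 - 1 + 2) = p := Prod.ext (by omega) (by omega)
        rw [this]; exact hp
      · intro hq
        obtain ⟨h1, h2⟩ := hform q hq
        exact ⟨q, hq, Prod.ext (by omega) (by omega)⟩
    · intro S hS
      rw [Finset.image_image]
      have : ((fun p : ℕ × ℕ => p.1 - 1) ∘ (fun i => (i+1, i+2))) = id := by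
        funext i; simp
      rw [this, Finset.image_id]

/-- For `n ≥ 3`, `b ≥ 1`, the number of ways to select `b`
pairwise vertex-disjoint cyclic 1-arcs over `{1,…,n}` (matchings of size `b`
in the cycle on `n` vertices) equals `C(n-b-1, b-1) + C(n-b, b)`. -/
theorem count_disjoint_cyclic_one_arcs (n b : ℕ) (hn : 3 ≤ n) (hb : 1 ≤ b) :
    Nat.card {A : Finset (ℕ × ℕ) //
        A.card = b ∧ (∀ p ∈ A, IsCyclicOneArc n p) ∧ ArcsDisjoint A} =
      (n - b - 1).choose (b - 1) + (n - b).choose b := by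
  rw [aux_cycle_count n b hn hb, nc_formula, nc_formula]
  have e1 : n - 3 + 1 - (b - 1) = n - b - 1 := by omega
  have e2 : n - 1 + 1 - b = n - b := by omega
  rw [e1, e2]
end
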